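/- arXiv:2504.21728 — 7 statements merged into one kernel-verified Lean document; each statement's English description precedes it below -/
import Mathlib

section
/- For any number of agents n, any number of items m, any positive weights (w_1,...,w_n), and any nonnegative additive utilities, the allocation returned by the weighted picking sequence algorithm (for any tie-breaking rule) is weighted envy-free up to one item (WEF1). -/
open Finset

/-- `pickCount picker i s` is the number of picks made by agent `i` among the first `s` steps. -/
def pickCount {n m : ℕ} (picker : Fin m → Fin n) (i : Fin n) (s : ℕ) : ℕ :=
  (Finset.univ.filter fun s' : Fin m => (s' : ℕ) < s ∧ picker s' = i).card

/-- A run of the weighted picking sequence algorithm (for an arbitrary tie-breaking rule):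
at step `s`, agent `picker s` picks item `item s`.  The picking agent must minimize
`t_i / w_i` among all agents, and the picked item must maximize her utility among the
items that have not been picked at earlier steps. -/
structure IsWPSRun {n m : ℕ} (w : Fin n → ℝ) (u : Fin n → Fin m → ℝ)
    (picker : Fin m → Fin n) (item : Fin m → Fin m) : Prop where
  item_inj : Function.Injective item
  min_ratio : ∀ s : Fin m, ∀ j : Fin n,
    (pickCount picker (picker s) (s : ℕ) : ℝ) / w (picker s)
      ≤ (pickCount picker j (s : ℕ) : ℝ) / w j
  best_item : ∀ s g : Fin m, (∀ s' : Fin m, (s' : ℕ) < (s : ℕ) → item s' ≠ g) →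
    u (picker s) g ≤ u (picker s) (item s)

/-- The bundle received by agent `i` in a run of the weighted picking sequence algorithm. -/
def runBundle {n m : ℕ} (picker : Fin m → Fin n) (item : Fin m → Fin m) (i : Fin n) :
    Finset (Fin m) :=
  (Finset.univ.filter fun s : Fin m => picker s = i).image item

/-- An allocation `A` is weighted envy-free up to one item (WEF1): for all agents `i, j`
with `A j` nonempty, there exists `g ∈ A j` with
`u_i(A_i)/w_i ≥ u_i(A_j \ {g})/w_j`. -/
def IsWEF1 {n m : ℕ} (w : Fin n → ℝ) (u : Fin n → Fin m → ℝ)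
    (A : Fin n → Finset (Fin m)) : Prop :=
  ∀ i j : Fin n, (A j).Nonempty →
    ∃ g ∈ A j, (∑ g' ∈ (A j).erase g, u i g') / w j ≤ (∑ g' ∈ A i, u i g') / w i

/-! Fix agents `i` and `j`, and let `s₀ < s₁ < ⋯` be the steps at which `j` picks. When `j`
makes its pick at `sₜ`, the minimality of `t_j / w_j` means `i` has already picked at least
`t · w_i / w_j` times, and each of those items is worth at least as much to `i` as any item `j`
takes from `sₜ` on. These inequalities are summed by an Abel-type induction over `j`'s picks
`s₁, s₂, …`: peeling off the last one, the leftover weight `t_i / w_i - t_j / w_j ≥ 0` is paid at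
a threshold `μ` that bounds `i`'s earlier items from below and is raised to the value of each
peeled pick. The first pick `s₀` is the one item `j` gives up. -/

section Precedence

variable {α : Type*} [LinearOrder α] {I : Finset α} {v : α → ℝ} {wi wj : ℝ}

theorem sum_div_add_mul_le_sum_filter_lt_div (hwi : 0 < wi) (hwj : 0 < wj) (T : Finset α)
    (hcount : ∀ s ∈ T, ((#{y ∈ T | y < s} : ℝ) + 1) / wj ≤ #{p ∈ I | p < s} / wi)
    (hval : ∀ s ∈ T, ∀ p ∈ I, p < s → v s ≤ v p)
    (x : α) (hTx : ∀ s ∈ T, s ≤ x) (μ : ℝ) (hμ : ∀ p ∈ I, p < x → μ ≤ v p) :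
    (∑ s ∈ T, v s) / wj + ((#{p ∈ I | p < x} : ℝ) / wi - #T / wj) * μ
      ≤ (∑ p ∈ I with p < x, v p) / wi := by
  induction T using Finset.induction_on_max generalizing x μ with
  | empty =>
    have := card_nsmul_le_sum _ v μ fun p hp => hμ p (mem_filter.1 hp).1 (mem_filter.1 hp).2
    rw [nsmul_eq_mul] at this
    simp only [sum_empty, zero_div, card_empty, CharP.cast_eq_zero, sub_zero, zero_add]
    rw [div_mul_eq_mul_div]
    exact div_le_div_of_nonneg_right this hwi.le
  | insert a T hlt ih =>
    have haT : a ∉ T := fun h => lt_irrefl a (hlt a h)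
    have hax : a ≤ x := hTx a (mem_insert_self a T)
    have hfilter_a : #{y ∈ insert a T | y < a} = #T := by
      rw [filter_insert, if_neg (lt_irrefl a), filter_true_of_mem hlt]
    have hfilter_s : ∀ s ∈ T, #{y ∈ insert a T | y < s} = #{y ∈ T | y < s} := fun s hs => by
      rw [filter_insert, if_neg (hlt s hs).not_gt]
    set μ' := max μ (v a)
    have ih' := ih
      (fun s hs => by simpa only [hfilter_s s hs] using hcount s (mem_insert_of_mem hs))
      (fun s hs => hval s (mem_insert_of_mem hs)) a (fun s hs => (hlt s hs).le) μ'
      fun p hp hpa => max_le (hμ p hp (hpa.trans_le hax)) (hval a (mem_insert_self a T) p hp hpa)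
    have hcount_a := hcount a (mem_insert_self a T)
    rw [hfilter_a] at hcount_a
    set J := I.filter (· < x)
    have hJa : J.filter (· < a) = I.filter (· < a) := by
      rw [filter_filter]
      exact filter_congr fun p _ => ⟨fun h => h.2, fun h => ⟨h.trans_le hax, h⟩⟩
    have hsum := sum_filter_add_sum_filter_not J (· < a) v
    have hcard := card_filter_add_card_filter_not (s := J) (· < a)
    have hrest := card_nsmul_le_sum (J.filter fun p => ¬ p < a) v μ fun p hp =>
      hμ p (mem_filter.1 (mem_filter.1 hp).1).1 (mem_filter.1 (mem_filter.1 hp).1).2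
    rw [hJa] at hsum hcard
    rw [nsmul_eq_mul] at hrest
    rw [sum_insert haT, card_insert_of_notMem haT, ← hsum, ← hcard]
    have hμμ' : 0 ≤ ((#{p ∈ I | p < a} : ℝ) / wi - #T / wj - 1 / wj) * (μ' - μ) :=
      mul_nonneg (by rw [add_div] at hcount_a; linarith) (sub_nonneg.2 (le_max_left _ _))
    have hva : v a / wj ≤ μ' / wj := div_le_div_of_nonneg_right (le_max_right _ _) hwj.le
    have hrest' :
        (#(J.filter fun p => ¬ p < a) : ℝ) * μ / wi ≤ (∑ p ∈ J with ¬ p < a, v p) / wi :=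
      div_le_div_of_nonneg_right hrest hwi.le
    push_cast
    linear_combination ih' + hμμ' + hva + hrest'

theorem sum_div_le_sum_div_of_precedes (hwi : 0 < wi) (hwj : 0 < wj) (hv : ∀ p ∈ I, 0 ≤ v p)
    (T : Finset α)
    (hcount : ∀ s ∈ T, ((#{y ∈ T | y < s} : ℝ) + 1) / wj ≤ #{p ∈ I | p < s} / wi)
    (hval : ∀ s ∈ T, ∀ p ∈ I, p < s → v s ≤ v p) :
    (∑ s ∈ T, v s) / wj ≤ (∑ p ∈ I, v p) / wi := by
  obtain rfl | hT := T.eq_empty_or_nonempty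
  · rw [sum_empty, zero_div]
    exact div_nonneg (sum_nonneg hv) hwi.le
  have key := sum_div_add_mul_le_sum_filter_lt_div hwi hwj T hcount hval (T.max' hT)
    (fun s hs => T.le_max' s hs) 0 fun p hp _ => hv p hp
  rw [mul_zero, add_zero] at key
  exact key.trans <| div_le_div_of_nonneg_right
    (sum_le_sum_of_subset_of_nonneg (filter_subset _ I) fun p hp _ => hv p hp) hwi.le

theorem card_filter_lt_erase_min'_add_one {S : Finset α} (hS : S.Nonempty) {s : α}
    (hs : s ∈ S.erase (S.min' hS)) :
    #{y ∈ S.erase (S.min' hS) | y < s} + 1 = #{y ∈ S | y < s} := by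
  have hmin : S.min' hS ∈ S.filter (· < s) := mem_filter.2
    ⟨S.min'_mem hS, (S.min'_le s (mem_of_mem_erase hs)).lt_of_ne (ne_of_mem_erase hs).symm⟩
  rw [filter_erase, card_erase_add_one hmin]

theorem sum_erase_min'_div_le_sum_div (hwi : 0 < wi) (hwj : 0 < wj) (hv : ∀ p ∈ I, 0 ≤ v p)
    {S : Finset α} (hS : S.Nonempty)
    (hcount : ∀ s ∈ S, (#{y ∈ S | y < s} : ℝ) / wj ≤ #{p ∈ I | p < s} / wi)
    (hval : ∀ s ∈ S, ∀ p ∈ I, p < s → v s ≤ v p) :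
    (∑ s ∈ S.erase (S.min' hS), v s) / wj ≤ (∑ p ∈ I, v p) / wi :=
  sum_div_le_sum_div_of_precedes hwi hwj hv _
    (fun s hs => by
      exact_mod_cast card_filter_lt_erase_min'_add_one hS hs ▸ hcount s (mem_of_mem_erase hs))
    fun s hs => hval s (mem_of_mem_erase hs)

end Precedence

section PickingSequence

variable {n m : ℕ} (picker : Fin m → Fin n)

def pickSteps (i : Fin n) : Finset (Fin m) := {s | picker s = i}

theorem runBundle_eq_image_pickSteps (item : Fin m → Fin m) (i : Fin n) :
    runBundle picker item i = (pickSteps picker i).image item := rfl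

theorem pickCount_eq_card_filter (i : Fin n) (x : Fin m) :
    pickCount picker i x = #{s ∈ pickSteps picker i | s < x} := by
  rw [pickCount, pickSteps, filter_filter]
  simp only [Fin.lt_def, and_comm]

end PickingSequence

/-- For any number of agents, items, positive weights, and nonnegative additive utilities,
the allocation returned by the weighted picking sequence algorithm (for any tie-breaking
rule) is WEF1. -/
theorem wps_is_WEF1 {n m : ℕ} (w : Fin n → ℝ) (hw : ∀ i, 0 < w i)
    (u : Fin n → Fin m → ℝ) (hu : ∀ i g, 0 ≤ u i g)
    (picker : Fin m → Fin n) (item : Fin m → Fin m)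
    (hrun : IsWPSRun w u picker item) :
    IsWEF1 w u (runBundle picker item) := by
  intro i j hj
  simp only [runBundle_eq_image_pickSteps] at hj ⊢
  have hS := image_nonempty.1 hj
  refine ⟨item ((pickSteps picker j).min' hS), mem_image_of_mem item (min'_mem _ hS), ?_⟩
  rw [← image_erase hrun.item_inj, sum_image hrun.item_inj.injOn, sum_image hrun.item_inj.injOn]
  refine sum_erase_min'_div_le_sum_div (hw i) (hw j) (fun p _ => hu i _) hS (fun s hs => ?_)
    (fun s hs p hp hps => ?_)
  · have h := hrun.min_ratio s i
    rwa [(mem_filter.1 hs).2, pickCount_eq_card_filter, pickCount_eq_card_filter] at h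
  · have h := hrun.best_item p (item s) fun s' hs' hs's => by
      rw [hrun.item_inj hs's] at hs'
      exact hps.not_gt (Fin.lt_def.2 hs')
    rwa [(mem_filter.1 hp).2] at h
end

section
/- In any run of the weighted picking sequence algorithm, for every step s and every pair of distinct agents i,j, it holds that (t_j(s) - 1)/w_j <= t_i(s)/w_i, where t_i(s) denotes the number of items agent i has picked after s items have been allocated in total. -/
open Finset

lemma pickCount_mono {n m : ℕ} (picker : Fin m → Fin n) (i : Fin n) {a b : ℕ}
    (hab : a ≤ b) : pickCount picker i a ≤ pickCount picker i b := by
  apply Finset.card_le_card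
  intro x hx
  simp only [Finset.mem_filter, Finset.mem_univ, true_and] at hx ⊢
  exact ⟨hx.1.trans_le hab, hx.2⟩

/-- In any run of the weighted picking sequence algorithm, for every step `s` and every
pair of distinct agents `i, j`, we have `(t_j(s) - 1)/w_j ≤ t_i(s)/w_i`. -/
theorem wps_pickCount_ratio {n m : ℕ} (w : Fin n → ℝ) (hw : ∀ i, 0 < w i)
    (u : Fin n → Fin m → ℝ)
    (picker : Fin m → Fin n) (item : Fin m → Fin m)
    (hrun : IsWPSRun w u picker item) :
    ∀ s : ℕ, s ≤ m → ∀ i j : Fin n, i ≠ j →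
      ((pickCount picker j s : ℝ) - 1) / w j ≤ (pickCount picker i s : ℝ) / w i := by
  intro s hs i j hij
  by_cases h0 : pickCount picker j s = 0
  · rw [h0]
    have h1 : ((0:ℕ):ℝ) - 1 ≤ 0 := by norm_num
    have := div_nonneg (Nat.cast_nonneg (pickCount picker i s)) (hw i).le
    calc (((0:ℕ):ℝ) - 1) / w j ≤ 0 / w j := by
          exact div_le_div_of_nonneg_right h1 (hw j).le
      _ = 0 := by ring
      _ ≤ _ := this
  · have hne : (Finset.univ.filter fun s' : Fin m => (s' : ℕ) < s ∧ picker s' = j).Nonempty := by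
      rw [← Finset.card_pos]
      exact Nat.pos_of_ne_zero h0
    set S := Finset.univ.filter fun s' : Fin m => (s' : ℕ) < s ∧ picker s' = j with hS
    obtain ⟨s', hs'mem, hs'max⟩ := S.exists_max_image (fun x => (x : ℕ)) hne
    simp only [hS, Finset.mem_filter, Finset.mem_univ, true_and] at hs'mem
    obtain ⟨hs'lt, hs'pick⟩ := hs'mem
    have key : pickCount picker j s = pickCount picker j (s' : ℕ) + 1 := by
      have heq : (Finset.univ.filter fun x : Fin m => (x : ℕ) < s ∧ picker x = j)
          = insert s' (Finset.univ.filter fun x : Fin m => (x : ℕ) < (s' : ℕ) ∧ picker x = j) := by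
        ext x
        simp only [Finset.mem_filter, Finset.mem_univ, true_and, Finset.mem_insert]
        constructor
        · rintro ⟨hx1, hx2⟩
          have hle : (x : ℕ) ≤ (s' : ℕ) := hs'max x (by
            simp only [hS, Finset.mem_filter, Finset.mem_univ, true_and]; exact ⟨hx1, hx2⟩)
          rcases eq_or_lt_of_le hle with h | h
          · left; exact Fin.ext h
          · right; exact ⟨h, hx2⟩
        · rintro (rfl | ⟨hx1, hx2⟩)
          · exact ⟨hs'lt, hs'pick⟩
          · exact ⟨hx1.trans hs'lt, hx2⟩
      rw [pickCount, heq, Finset.card_insert_of_notMem (by simp [pickCount])]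
      rfl
    have hmin := hrun.min_ratio s' i
    rw [hs'pick] at hmin
    have hmono : (pickCount picker i (s' : ℕ) : ℝ) ≤ (pickCount picker i s : ℝ) := by
      exact_mod_cast pickCount_mono picker i hs'lt.le
    calc ((pickCount picker j s : ℝ) - 1) / w j
        = (pickCount picker j (s' : ℕ) : ℝ) / w j := by rw [key]; push_cast; ring_nf
      _ ≤ (pickCount picker i (s' : ℕ) : ℝ) / w i := hmin
      _ ≤ (pickCount picker i s : ℝ) / w i := by
          gcongr
          exact (hw i).le
end

section
/- In any run of the weighted picking sequence algorithm, for every step s and all agents i,j, it holds that | t_i(s)/w_i - t_j(s)/w_j | <= 1/min(w_i, w_j). -/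
open Finset

/-- In any run of the weighted picking sequence algorithm, for every step `s` and all
agents `i, j`, we have `|t_i(s)/w_i - t_j(s)/w_j| ≤ 1/min(w_i, w_j)`. -/
theorem wps_pickCount_ratio_diff {n m : ℕ} (w : Fin n → ℝ) (hw : ∀ i, 0 < w i)
    (u : Fin n → Fin m → ℝ)
    (picker : Fin m → Fin n) (item : Fin m → Fin m)
    (hrun : IsWPSRun w u picker item) :
    ∀ s : ℕ, s ≤ m → ∀ i j : Fin n,
      |(pickCount picker i s : ℝ) / w i - (pickCount picker j s : ℝ) / w j|
        ≤ 1 / min (w i) (w j) := by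
  -- auxiliary facts about pickCount
  have hzero : ∀ i : Fin n, pickCount picker i 0 = 0 := by
    intro i; unfold pickCount; simp
  have hsucc : ∀ (s : ℕ) (hs : s < m) (i : Fin n),
      pickCount picker i (s + 1)
        = pickCount picker i s + if picker ⟨s, hs⟩ = i then 1 else 0 := by
    intro s hs i
    unfold pickCount
    have hset : (Finset.univ.filter fun s' : Fin m => (s' : ℕ) < s + 1 ∧ picker s' = i)
        = (Finset.univ.filter fun s' : Fin m => (s' : ℕ) < s ∧ picker s' = i)
          ∪ (Finset.univ.filter fun s' : Fin m => s' = ⟨s, hs⟩ ∧ picker s' = i) := by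
      ext x
      simp only [Finset.mem_filter, Finset.mem_union, Finset.mem_univ, true_and,
        Nat.lt_succ_iff_lt_or_eq, or_and_right, Fin.ext_iff]
    rw [hset, Finset.card_union_of_disjoint]
    · congr 1
      by_cases h : picker ⟨s, hs⟩ = i
      · rw [if_pos h]
        have : (Finset.univ.filter fun s' : Fin m => s' = ⟨s, hs⟩ ∧ picker s' = i)
            = {⟨s, hs⟩} := by
          ext x
          simp only [Finset.mem_filter, Finset.mem_univ, true_and, Finset.mem_singleton]
          constructor
          · rintro ⟨h1, _⟩; exact h1
          · rintro rfl; exact ⟨rfl, h⟩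
        rw [this]; simp
      · rw [if_neg h]
        have : (Finset.univ.filter fun s' : Fin m => s' = ⟨s, hs⟩ ∧ picker s' = i)
            = ∅ := by
          ext x
          simp only [Finset.mem_filter, Finset.mem_univ, true_and, Finset.notMem_empty,
            iff_false]
          rintro ⟨rfl, h2⟩; exact h h2
        rw [this]; simp
    · rw [Finset.disjoint_left]
      intro x hx hx'
      simp only [Finset.mem_filter] at hx hx'
      rcases hx with ⟨-, h1, -⟩
      rcases hx' with ⟨-, h2, -⟩
      subst h2; simp at h1
  have hmono : ∀ (s : ℕ) (i : Fin n), pickCount picker i s ≤ pickCount picker i (s + 1) := by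
    intro s i
    apply Finset.card_le_card
    intro x hx
    simp only [Finset.mem_filter] at hx ⊢
    exact ⟨hx.1, hx.2.1.trans (Nat.lt_succ_self s), hx.2.2⟩
  -- key invariant
  have key : ∀ s : ℕ, s ≤ m → ∀ i j : Fin n,
      ((pickCount picker i s : ℝ) - 1) / w i ≤ (pickCount picker j s : ℝ) / w j := by
    intro s
    induction s with
    | zero =>
      intro _ i j
      rw [hzero, hzero]
      simp only [Nat.cast_zero, zero_sub, zero_div]
      rw [div_nonpos_iff]
      right; exact ⟨by norm_num, (hw i).le⟩
    | succ s ih =>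
      intro hsm i j
      have hs : s < m := Nat.lt_of_succ_le hsm
      have hmin := hrun.min_ratio ⟨s, hs⟩
      have hrhs : (pickCount picker j s : ℝ) / w j
          ≤ (pickCount picker j (s + 1) : ℝ) / w j := by
        gcongr
        · exact (hw j).le
        · exact_mod_cast hmono s j
      by_cases hi : picker ⟨s, hs⟩ = i
      · have : pickCount picker i (s + 1) = pickCount picker i s + 1 := by
          rw [hsucc s hs i, if_pos hi]
        rw [this]
        push_cast
        have h1 : (pickCount picker i s : ℝ) / w i
            ≤ (pickCount picker j s : ℝ) / w j := by
          have := hmin j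
          simp only [Fin.val_mk] at this
          rwa [hi] at this
        calc ((pickCount picker i s : ℝ) + 1 - 1) / w i
            = (pickCount picker i s : ℝ) / w i := by ring_nf
          _ ≤ (pickCount picker j s : ℝ) / w j := h1
          _ ≤ _ := hrhs
      · have : pickCount picker i (s + 1) = pickCount picker i s := by
          rw [hsucc s hs i, if_neg hi]; simp
        rw [this]
        exact (ih hs.le i j).trans hrhs
  -- conclude
  intro s hsm i j
  have hminpos : 0 < min (w i) (w j) := lt_min (hw i) (hw j)
  have h1 : 1 / w i ≤ 1 / min (w i) (w j) :=
    one_div_le_one_div_of_le hminpos (min_le_left _ _)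
  have h2 : 1 / w j ≤ 1 / min (w i) (w j) :=
    one_div_le_one_div_of_le hminpos (min_le_right _ _)
  rw [abs_sub_le_iff]
  constructor
  · have := key s hsm i j
    rw [sub_div] at this
    have : (pickCount picker i s : ℝ) / w i - (pickCount picker j s : ℝ) / w j
        ≤ 1 / w i := by linarith
    linarith
  · have := key s hsm j i
    rw [sub_div] at this
    have : (pickCount picker j s : ℝ) / w j - (pickCount picker i s : ℝ) / w i
        ≤ 1 / w j := by linarith
    linarith
end

section
/- In any run of the weighted picking sequence algorithm, for every step s and every agent i, it holds that | t_i(s) - (w_i/W) * s | <= w_i / w_min, where W is the sum of all weights and w_min is the minimum weight. -/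
open Finset

/-! The algorithm keeps the invariant `(t_i - 1) / w_i ≤ t_j / w_j` for all agents `i, j`: only an
agent of least ratio `t_i / w_i` picks, and her ratio then grows by `1 / w_i`. Clearing
denominators and summing over `j`, with `∑ t_j = s`, gives `t_i - (w_i / W) s ≤ 1 ≤ w_i / w_min`
and `(w_i / W) s - t_i ≤ n w_i / W ≤ w_i / w_min`. -/

section Proportionality

variable {ι : Type*} [Fintype ι] (t w : ι → ℝ)

theorem sub_div_sum_mul_sum_le_one (hw : ∀ i, 0 < w i)
    (h : ∀ i j, (t i - 1) * w j ≤ t j * w i) (i : ι) :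
    t i - w i / (∑ j, w j) * ∑ j, t j ≤ 1 := by
  have hW : 0 < ∑ j, w j := sum_pos (fun j _ ↦ hw j) ⟨i, mem_univ i⟩
  have hsum : (t i - 1) * ∑ j, w j ≤ (∑ j, t j) * w i := by
    simpa only [← mul_sum, ← sum_mul] using sum_le_sum fun j (_ : j ∈ univ) ↦ h i j
  rw [div_mul_eq_mul_div, sub_le_comm, le_div_iff₀ hW]
  linarith

theorem div_sum_mul_sum_sub_le_card_mul_div (hw : ∀ i, 0 < w i)
    (h : ∀ i j, (t i - 1) * w j ≤ t j * w i) (i : ι) :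
    w i / (∑ j, w j) * ∑ j, t j - t i ≤ Fintype.card ι * w i / ∑ j, w j := by
  have hW : 0 < ∑ j, w j := sum_pos (fun j _ ↦ hw j) ⟨i, mem_univ i⟩
  have hsum : (∑ j, t j - Fintype.card ι) * w i ≤ t i * ∑ j, w j := by
    have := sum_le_sum fun j (_ : j ∈ univ) ↦ h j i
    simpa only [← mul_sum, ← sum_mul, sum_sub_distrib, sum_const, card_univ, nsmul_one] using this
  rw [div_mul_eq_mul_div, div_sub' hW.ne', div_le_div_iff_of_pos_right hW]
  linarith

theorem card_mul_div_sum_le_div_inf' (hw : ∀ i, 0 < w i) (i : ι) :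
    Fintype.card ι * w i / ∑ j, w j ≤ w i / univ.inf' ⟨i, mem_univ i⟩ w := by
  have hmin : 0 < univ.inf' ⟨i, mem_univ i⟩ w := (lt_inf'_iff _).mpr fun j _ ↦ hw j
  have hcard : Fintype.card ι * univ.inf' ⟨i, mem_univ i⟩ w ≤ ∑ j, w j := by
    simpa using card_nsmul_le_sum univ w _ fun j _ ↦ inf'_le w (mem_univ j)
  have hW : 0 < ∑ j, w j := sum_pos (fun j _ ↦ hw j) ⟨i, mem_univ i⟩
  rw [div_le_div_iff₀ hW hmin]
  calc Fintype.card ι * w i * univ.inf' ⟨i, mem_univ i⟩ w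
      = w i * (Fintype.card ι * univ.inf' ⟨i, mem_univ i⟩ w) := by ring
    _ ≤ w i * ∑ j, w j := mul_le_mul_of_nonneg_left hcard (hw i).le

theorem abs_sub_div_sum_mul_sum_le_div_inf' (hw : ∀ i, 0 < w i)
    (h : ∀ i j, (t i - 1) * w j ≤ t j * w i) (i : ι) :
    |t i - w i / (∑ j, w j) * ∑ j, t j| ≤ w i / univ.inf' ⟨i, mem_univ i⟩ w := by
  have hone : 1 ≤ w i / univ.inf' ⟨i, mem_univ i⟩ w :=
    (one_le_div ((lt_inf'_iff _).mpr fun j _ ↦ hw j)).mpr (inf'_le w (mem_univ i))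
  rw [abs_le]
  constructor
  · linarith [div_sum_mul_sum_sub_le_card_mul_div t w hw h i,
      card_mul_div_sum_le_div_inf' w hw i]
  · linarith [sub_div_sum_mul_sum_le_one t w hw h i]

end Proportionality

section PickCount

variable {n m : ℕ} (picker : Fin m → Fin n)

theorem pickCount_mono_s3 (i : Fin n) : Monotone (pickCount picker i) := fun _ _ hst ↦
  card_le_card <| monotone_filter_right _ fun _ _ ↦ And.imp_left (lt_of_lt_of_le · hst)

theorem pickCount_zero (i : Fin n) : pickCount picker i 0 = 0 := by
  simp [pickCount]

theorem pickCount_succ_of_ne {i : Fin n} {s : ℕ} (hs : s < m) (hi : picker ⟨s, hs⟩ ≠ i) :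
    pickCount picker i (s + 1) = pickCount picker i s := by
  refine congrArg card <| filter_congr fun x _ ↦
    and_congr_left fun hx ↦ ⟨fun hlt ↦ ?_, Nat.lt_succ_of_lt⟩
  rcases Nat.lt_succ_iff_lt_or_eq.mp hlt with hlt | rfl
  · exact hlt
  · exact absurd hx hi

theorem pickCount_succ_self {s : ℕ} (hs : s < m) :
    pickCount picker (picker ⟨s, hs⟩) (s + 1) = pickCount picker (picker ⟨s, hs⟩) s + 1 := by
  unfold pickCount
  rw [← card_insert_of_notMem (s := filter _ _) (a := ⟨s, hs⟩) (by simp)]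
  congr 1
  ext x
  simp only [mem_filter, mem_univ, true_and, mem_insert, Nat.lt_succ_iff_lt_or_eq, Fin.ext_iff]
  grind

theorem sum_pickCount {s : ℕ} (hs : s ≤ m) : ∑ i, pickCount picker i s = s := by
  have hfib := card_eq_sum_card_fiberwise (f := picker) (s := {x : Fin m | (x : ℕ) < s})
    (t := univ) fun _ _ ↦ mem_univ _
  rw [Fin.card_filter_val_lt, min_eq_right hs] at hfib
  simpa only [filter_filter, pickCount] using hfib.symm

theorem pickCount_sub_one_mul_le_of_min_ratio {w : Fin n → ℝ} (hw : ∀ i, 0 < w i)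
    (hmin : ∀ s : Fin m, ∀ j : Fin n, (pickCount picker (picker s) s : ℝ) / w (picker s)
      ≤ (pickCount picker j s : ℝ) / w j)
    {s : ℕ} (hs : s ≤ m) (i j : Fin n) :
    ((pickCount picker i s : ℝ) - 1) * w j ≤ pickCount picker j s * w i := by
  induction s with
  | zero => simpa [pickCount_zero] using (hw j).le
  | succ s ih =>
    have hs' : s < m := hs
    have hj : (pickCount picker j s : ℝ) * w i ≤ pickCount picker j (s + 1) * w i :=
      mul_le_mul_of_nonneg_right (mod_cast pickCount_mono_s3 picker j s.le_succ) (hw i).le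
    by_cases hi : picker ⟨s, hs'⟩ = i
    · subst hi
      have hratio := (div_le_div_iff₀ (hw _) (hw j)).mp (hmin ⟨s, hs'⟩ j)
      rw [pickCount_succ_self, Nat.cast_succ, add_sub_cancel_right]
      exact hratio.trans hj
    · rw [pickCount_succ_of_ne picker hs' hi]
      exact (ih hs'.le).trans hj

end PickCount

/-- In any run of the weighted picking sequence algorithm, for every step `s` and every
agent `i`, we have `|t_i(s) - (w_i/W)·s| ≤ w_i / w_min`, where `W` is the sum of all
weights and `w_min` is the minimum weight. -/
theorem wps_pickCount_proportional {n m : ℕ} (w : Fin n → ℝ) (hw : ∀ i, 0 < w i)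
    (u : Fin n → Fin m → ℝ)
    (picker : Fin m → Fin n) (item : Fin m → Fin m)
    (hrun : IsWPSRun w u picker item) :
    ∀ s : ℕ, s ≤ m → ∀ i : Fin n,
      |(pickCount picker i s : ℝ) - w i / (∑ j, w j) * s|
        ≤ w i / (Finset.univ.inf' ⟨i, Finset.mem_univ i⟩ w) := by
  intro s hs i
  have hsum : ∑ j, (pickCount picker j s : ℝ) = s := by exact_mod_cast sum_pickCount picker hs
  rw [← hsum]
  exact abs_sub_div_sum_mul_sum_le_div_inf' _ w hw
    (pickCount_sub_one_mul_le_of_min_ratio picker hw hrun.min_ratio hs) i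
end

section
/- Let B >= 1 be a constant, let n <= m, let p satisfy 8*B*log(m)/n <= p <= 1, and let G be a random bipartite graph sampled from G(n,m,p). Let s = (s_1,...,s_n) be a vector of positive integers with sum_{i=1}^n s_i <= m and max_i s_i / min_i s_i <= B. Then the probability that G contains a left-saturating s-matching is at least 1 - 1/n. -/
open Finset MeasureTheory
open scoped ENNReal

/-!
By Hall's theorem, applied after splitting each left vertex `i` into `s i` copies, a
left-saturating `s`-matching exists unless some set `T` of left vertices has fewer than
`σ(T) = ∑ i ∈ T, s i` neighbours; then some `m + 1 - σ(T)` right vertices receive no edge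
from `T`. A union bound over `T` and these right sets bounds the failure probability by
`∑ T, C(m, m + 1 - σ(T)) (1 - p) ^ (|T| (m + 1 - σ(T)))`. For `|T| = t` the ratio condition
gives `σ(T) ≤ tBm/n`: if `2Bt ≤ n`, at least `m/2` right vertices avoid `T`; otherwise
`pt ≥ 4 log m`. In both cases the `C(n, t)` sets of size `t` contribute at most `m⁻³`, for a
total of at most `(n + 1) / m³ ≤ 1 / n`.
-/

def IsLeftSatSMatching {n m : ℕ} (E : Fin n → Fin m → Prop) (s : Fin n → ℕ)
    (F : Finset (Fin n × Fin m)) : Prop :=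
  (∀ e ∈ F, E e.1 e.2) ∧
  (∀ i : Fin n, (F.filter fun e => e.1 = i).card = s i) ∧
  (∀ g : Fin m, (F.filter fun e => e.2 = g).card ≤ 1)

lemma card_filter_sigma_fst_eq {ι : Type*} [Fintype ι] [DecidableEq ι] {κ : ι → Type*}
    [∀ i, Fintype (κ i)] (i : ι) : #{x : Σ i, κ i | x.1 = i} = Fintype.card (κ i) := by
  rw [card_filter, Fintype.sum_sigma]
  simp [apply_ite card]

section Hall

variable {n m : ℕ} (E : Fin n → Fin m → Prop) [DecidableRel E]

def rightNeighbors (T : Finset (Fin n)) : Finset (Fin m) := {g | ∃ i ∈ T, E i g}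

theorem exists_isLeftSatSMatching_of_forall_sum_le_card (s : Fin n → ℕ)
    (hall : ∀ T, ∑ i ∈ T, s i ≤ #(rightNeighbors E T)) :
    ∃ F, IsLeftSatSMatching E s F := by
  let t : (Σ i, Fin (s i)) → Finset (Fin m) := fun x => {g | E x.1 g}
  have hcopies : ∀ A : Finset (Σ i, Fin (s i)), #A ≤ #(A.biUnion t) := by
    intro A
    calc #A = ∑ i ∈ A.image Sigma.fst, #{x ∈ A | x.1 = i} :=
          card_eq_sum_card_fiberwise fun x hx => mem_image_of_mem _ hx
      _ ≤ ∑ i ∈ A.image Sigma.fst, s i := by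
          gcongr with i
          simpa using (card_le_card (filter_subset_filter _ (subset_univ A))).trans
            (card_filter_sigma_fst_eq i).le
      _ ≤ #(rightNeighbors E (A.image Sigma.fst)) := hall _
      _ = #(A.biUnion t) := by
          congr 1; ext g; simp [rightNeighbors, t]
  obtain ⟨f, hf, hft⟩ := (all_card_le_biUnion_card_iff_existsInjective' t).mp hcopies
  let e : (Σ i, Fin (s i)) ↪ Fin n × Fin m :=
    ⟨fun x => (x.1, f x), fun x y hxy => hf (congrArg Prod.snd hxy)⟩
  refine ⟨univ.map e, ?_, fun i => ?_, fun g => card_le_one.mpr ?_⟩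
  · rintro _ hx
    obtain ⟨x, -, rfl⟩ := mem_map.mp hx
    exact (mem_filter.mp (hft x)).2
  · rw [filter_map, card_map]
    exact (card_filter_sigma_fst_eq (κ := fun i => Fin (s i)) i).trans (Fintype.card_fin _)
  · simp only [mem_filter, mem_map]
    rintro _ ⟨⟨x, -, rfl⟩, rfl⟩ _ ⟨⟨y, -, rfl⟩, hxy⟩
    rw [hf hxy]

end Hall

section Measure

variable {ι κ α : Type*} [Fintype ι] [Fintype κ] [MeasurableSpace α]
  (ν : Measure α) [IsProbabilityMeasure ν]

lemma measure_pi_setOf_forall_mem (U : Finset ι) (S : Set α) :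
    Measure.pi (fun _ : ι => ν) {x | ∀ g ∈ U, x g ∈ S} = ν S ^ #U := by
  have : {x : ι → α | ∀ g ∈ U, x g ∈ S} = (U : Set ι).pi fun _ => S := by ext; simp
  rw [this, Measure.pi_pi_finset, prod_const]

lemma measure_pi_pi_setOf_forall_mem (T : Finset ι) (U : Finset κ) (S : Set α) :
    Measure.pi (fun _ : ι => Measure.pi fun _ : κ => ν) {G | ∀ i ∈ T, ∀ g ∈ U, G i g ∈ S} =
      ν S ^ (#T * #U) := by
  rw [pow_mul', ← measure_pi_setOf_forall_mem ν U S, ← measure_pi_setOf_forall_mem]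
  rfl

end Measure

lemma PMF.toMeasure_bernoulli_false {p : ℝ} (hp0 : 0 ≤ p) (hp1 : p.toNNReal ≤ 1) :
    (PMF.bernoulli p.toNNReal hp1).toMeasure {false} = ENNReal.ofReal (1 - p) := by
  rw [PMF.toMeasure_apply_singleton _ _ (measurableSet_singleton _), PMF.bernoulli_apply,
    Bool.cond_false, ENNReal.ofReal, NNReal.sub_def, NNReal.coe_one, Real.coe_toNNReal _ hp0]

lemma one_sub_pow_le_inv_pow {p x : ℝ} (hp1 : p ≤ 1) (hx : 0 < x) {N k : ℕ}
    (h : k * Real.log x ≤ p * N) : (1 - p) ^ N ≤ (x ^ k)⁻¹ :=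
  calc (1 - p) ^ N ≤ Real.exp (-p) ^ N :=
        pow_le_pow_left₀ (by linarith) (Real.one_sub_le_exp_neg p) N
    _ = Real.exp (-(p * N)) := by rw [← Real.exp_nat_mul]; ring_nf
    _ ≤ Real.exp (-(k * Real.log x)) := by gcongr
    _ = (x ^ k)⁻¹ := by rw [Real.exp_neg, Real.exp_nat_mul, Real.exp_log hx]

lemma mul_mul_le_inv_pow {x a b c : ℝ} {i j k : ℕ} (hx : 0 < x) (hb : 0 ≤ b) (hc : 0 ≤ c)
    (hai : a ≤ x ^ i) (hbj : b ≤ x ^ j) (hck : c ≤ (x ^ (i + j + k))⁻¹) :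
    a * b * c ≤ (x ^ k)⁻¹ :=
  calc a * b * c ≤ x ^ i * x ^ j * (x ^ (i + j + k))⁻¹ := by gcongr
    _ = (x ^ k)⁻¹ := by rw [pow_add, pow_add]; field_simp

lemma choose_le_pow_of_le {n m k : ℕ} (hnm : n ≤ m) : (n.choose k : ℝ) ≤ (m : ℝ) ^ k := by
  exact_mod_cast (Nat.choose_le_pow n k).trans (Nat.pow_le_pow_left hnm k)

/-- The union-bound contribution of a left set of size `t` and demand `σ`, multiplied by the
number `C(n, t)` of left sets of that size. -/
lemma choose_mul_choose_mul_one_sub_pow_le {B p : ℝ} {n m t σ : ℕ} (hB : 1 ≤ B) (hnm : n ≤ m)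
    (hp : 8 * B * Real.log m / n ≤ p) (hp1 : p ≤ 1) (ht : 1 ≤ t) (htn : t ≤ n) (htσ : t ≤ σ)
    (hσm : σ + (n - t) ≤ m) (hσB : (σ : ℝ) * n ≤ B * t * m) :
    (n.choose t * m.choose (m + 1 - σ) * (1 - p) ^ (t * (m + 1 - σ)) : ℝ) ≤ ((m : ℝ) ^ 3)⁻¹ := by
  set L := Real.log m
  set u := m + 1 - σ with hu_def
  have hn : (0 : ℝ) < n := by exact_mod_cast ht.trans htn
  have hm : (0 : ℝ) < m := hn.trans_le (by exact_mod_cast hnm)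
  have hnmR : (n : ℝ) ≤ m := by exact_mod_cast hnm
  have htR : (1 : ℝ) ≤ t := by exact_mod_cast ht
  have hL : 0 ≤ L := Real.log_nonneg (by exact_mod_cast (ht.trans htn).trans hnm)
  have hpn : 8 * B * L ≤ p * n := (div_le_iff₀ hn).mp hp
  have hu : (u : ℝ) = m + 1 - σ := by
    rw [hu_def, Nat.cast_sub (by omega), Nat.cast_add, Nat.cast_one]
  have hpow : 0 ≤ (1 - p) ^ (t * u) := pow_nonneg (by linarith) _
  obtain hsmall | hlarge := le_or_gt (2 * B * t) n
  · have h2σ : 2 * (σ : ℝ) ≤ m := by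
      refine le_of_mul_le_mul_right ?_ hn
      nlinarith [mul_le_mul_of_nonneg_right hsmall hm.le]
    have hcount : ((t : ℝ) + σ + 2) * n ≤ 4 * B * t * m := by
      nlinarith [mul_le_mul hB hnmR hn.le (by linarith : (0 : ℝ) ≤ B)]
    have hexp : ((t + (σ - 1) + 3 : ℕ) : ℝ) * L ≤ p * (t * u : ℕ) := by
      push_cast [Nat.cast_sub (ht.trans htσ), hu]
      refine le_of_mul_le_mul_right ?_ hn
      have htu : (0 : ℝ) ≤ t * (m + 1 - σ) := by nlinarith
      have h4BtL : 0 ≤ 4 * B * t * L := by positivity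
      calc (t + (σ - 1 : ℝ) + 3) * L * n = ((t + σ + 2) * n) * L := by ring
        _ ≤ (4 * B * t * m) * L := by gcongr
        _ ≤ 4 * B * t * L * (2 * (m + 1 - σ)) := by nlinarith
        _ = t * (m + 1 - σ) * (8 * B * L) := by ring
        _ ≤ t * (m + 1 - σ) * (p * n) := by gcongr
        _ = p * (t * (m + 1 - σ)) * n := by ring
    have hchoose : m.choose u = m.choose (σ - 1) := by
      rw [← Nat.choose_symm (by omega : σ - 1 ≤ m)]; congr 1; omega
    rw [hchoose]
    exact mul_mul_le_inv_pow hm (by positivity) hpow (choose_le_pow_of_le hnm)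
      (choose_le_pow_of_le le_rfl) (one_sub_pow_le_inv_pow hp1 hm hexp)
  · have hp0 : 0 ≤ p := nonneg_of_mul_nonneg_left ((by positivity : 0 ≤ 8 * B * L).trans hpn) hn
    have hpt : 4 * L ≤ p * t := by
      refine le_of_mul_le_mul_left ?_ (by positivity : (0 : ℝ) < 2 * B)
      nlinarith [mul_le_mul_of_nonneg_left hlarge.le hp0]
    have hnu : ((n - t + u + 3 : ℕ) : ℝ) ≤ 4 * u := by
      exact_mod_cast (by omega : n - t + u + 3 ≤ 4 * u)
    have hexp : ((n - t + u + 3 : ℕ) : ℝ) * L ≤ p * (t * u : ℕ) :=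
      calc ((n - t + u + 3 : ℕ) : ℝ) * L ≤ 4 * u * L := by gcongr
        _ = u * (4 * L) := by ring
        _ ≤ u * (p * t) := by gcongr
        _ = p * (t * u : ℕ) := by push_cast; ring
    rw [← Nat.choose_symm htn]
    exact mul_mul_le_inv_pow hm (by positivity) hpow (choose_le_pow_of_le hnm)
      (choose_le_pow_of_le le_rfl) (one_sub_pow_le_inv_pow hp1 hm hexp)

lemma sum_mul_card_le {ι : Type*} [Fintype ι] {s : ι → ℝ} {B : ℝ}
    (hratio : ∀ i j, s i ≤ B * s j) (T : Finset ι) :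
    (∑ i ∈ T, s i) * Fintype.card ι ≤ B * #T * ∑ j, s j :=
  calc (∑ i ∈ T, s i) * Fintype.card ι = ∑ i ∈ T, ∑ _j : ι, s i := by
        simp [sum_mul, mul_comm]
    _ ≤ ∑ i ∈ T, ∑ j, B * s j := by gcongr with i _ j; exact hratio i j
    _ = B * #T * ∑ j, s j := by rw [sum_const, ← mul_sum, nsmul_eq_mul]; ring

lemma sum_choose_mul_one_sub_pow_le {B p : ℝ} {n m : ℕ} (hB : 1 ≤ B) (hn : 2 ≤ n) (hnm : n ≤ m)
    (hp : 8 * B * Real.log m / n ≤ p) (hp1 : p ≤ 1) {s : Fin n → ℕ} (hs : ∀ i, 1 ≤ s i)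
    (hsum : ∑ i, s i ≤ m) (hratio : ∀ i j : Fin n, (s i : ℝ) ≤ B * s j) :
    ∑ T : Finset (Fin n),
      (m.choose (m + 1 - ∑ i ∈ T, s i) * (1 - p) ^ (#T * (m + 1 - ∑ i ∈ T, s i)) : ℝ) ≤ 1 / n := by
  have hm : (0 : ℝ) < m := by exact_mod_cast (by omega : 0 < m)
  have hterm : ∀ T : Finset (Fin n),
      (m.choose (m + 1 - ∑ i ∈ T, s i) * (1 - p) ^ (#T * (m + 1 - ∑ i ∈ T, s i)) : ℝ) ≤
        ((m : ℝ) ^ 3)⁻¹ / n.choose #T := by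
    intro T
    have hTn : #T ≤ n := (card_le_univ T).trans_eq (Fintype.card_fin n)
    rw [le_div_iff₀ (by exact_mod_cast Nat.choose_pos hTn), mul_comm, ← mul_assoc]
    obtain rfl | hT := T.eq_empty_or_nonempty
    · simp
    have hcompl : #Tᶜ + ∑ i ∈ T, s i ≤ m := by
      calc #Tᶜ + ∑ i ∈ T, s i ≤ ∑ i ∈ Tᶜ, s i + ∑ i ∈ T, s i := by
            gcongr; simpa using card_nsmul_le_sum Tᶜ s 1 fun i _ => hs i
        _ ≤ m := by rwa [sum_compl_add_sum]
    refine choose_mul_choose_mul_one_sub_pow_le hB hnm hp hp1 (card_pos.mpr hT) hTn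
      (by simpa using card_nsmul_le_sum T s 1 fun i _ => hs i)
      (by rw [card_compl, Fintype.card_fin] at hcompl; omega) ?_
    simpa using (sum_mul_card_le hratio T).trans (by gcongr; exact_mod_cast hsum)
  calc _ ≤ ∑ T : Finset (Fin n), ((m : ℝ) ^ 3)⁻¹ / n.choose #T := sum_le_sum fun T _ => hterm T
    _ = ∑ k ∈ range (n + 1), n.choose k • (((m : ℝ) ^ 3)⁻¹ / n.choose k) := by
      rw [← powerset_univ, sum_powerset_apply_card fun k => ((m : ℝ) ^ 3)⁻¹ / n.choose k,
        card_univ, Fintype.card_fin]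
    _ = (n + 1) * ((m : ℝ) ^ 3)⁻¹ := by
      rw [sum_congr rfl fun k hk => ?_, sum_const, card_range, nsmul_eq_mul, Nat.cast_add,
        Nat.cast_one]
      rw [nsmul_eq_mul, mul_div_cancel₀]
      exact_mod_cast (Nat.choose_pos (Nat.lt_succ_iff.mp (mem_range.mp hk))).ne'
    _ ≤ 1 / n := by
      have hnmR : (n : ℝ) ≤ m := by exact_mod_cast hnm
      have hn2 : (2 : ℝ) ≤ n := by exact_mod_cast hn
      rw [← div_eq_mul_inv, div_le_div_iff₀ (by positivity) (by positivity)]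
      nlinarith [mul_le_mul hnmR hnmR (by positivity) hm.le]

lemma measure_setOf_exists_card_rightNeighbors_lt_le {n m : ℕ} (ν : Measure Bool)
    [IsProbabilityMeasure ν] (s : Fin n → ℕ) :
    Measure.pi (fun _ : Fin n => Measure.pi fun _ : Fin m => ν)
        {G | ∃ T, #(rightNeighbors (fun i g => G i g = true) T) < ∑ i ∈ T, s i} ≤
      ∑ T : Finset (Fin n),
        m.choose (m + 1 - ∑ i ∈ T, s i) * ν {false} ^ (#T * (m + 1 - ∑ i ∈ T, s i)) := by
  set μ := Measure.pi fun _ : Fin n => Measure.pi fun _ : Fin m => ν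
  -- a Hall violator `T` leaves at least `m + 1 - ∑ i ∈ T, s i` right vertices without edges to `T`
  have hcover : {G : Fin n → Fin m → Bool |
        ∃ T, #(rightNeighbors (fun i g => G i g = true) T) < ∑ i ∈ T, s i} ⊆
      ⋃ T : Finset (Fin n), ⋃ U ∈ powersetCard (m + 1 - ∑ i ∈ T, s i) univ,
        {G : Fin n → Fin m → Bool | ∀ i ∈ T, ∀ g ∈ U, G i g ∈ ({false} : Set Bool)} := by
    rintro G ⟨T, hT⟩
    obtain ⟨U, hU, hUcard⟩ := exists_subset_card_eq
      (s := (rightNeighbors (fun i g => G i g = true) T)ᶜ)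
      (n := m + 1 - ∑ i ∈ T, s i) (by rw [card_compl, Fintype.card_fin]; omega)
    simp only [Set.mem_iUnion]
    refine ⟨T, U, mem_powersetCard.mpr ⟨subset_univ U, hUcard⟩, fun i hi g hg => ?_⟩
    have := hU hg
    simp only [rightNeighbors, mem_compl, mem_filter, mem_univ, true_and, not_exists,
      not_and] at this
    simpa using this i hi
  calc μ _ ≤ μ (⋃ T : Finset (Fin n), ⋃ U ∈ powersetCard (m + 1 - ∑ i ∈ T, s i) univ,
        {G : Fin n → Fin m → Bool | ∀ i ∈ T, ∀ g ∈ U, G i g ∈ ({false} : Set Bool)}) :=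
        measure_mono hcover
    _ ≤ ∑ T : Finset (Fin n), ∑ U ∈ powersetCard (m + 1 - ∑ i ∈ T, s i) univ,
        μ {G | ∀ i ∈ T, ∀ g ∈ U, G i g ∈ ({false} : Set Bool)} :=
      (measure_iUnion_fintype_le _ _).trans (sum_le_sum fun T _ => measure_biUnion_finset_le _ _)
    _ = _ := by
      refine sum_congr rfl fun T _ => ?_
      rw [sum_congr rfl fun U hU => by
        rw [measure_pi_pi_setOf_forall_mem, (mem_powersetCard.mp hU).2]]
      rw [sum_const, card_powersetCard, card_univ, Fintype.card_fin, nsmul_eq_mul]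

/-- Let `B ≥ 1`, `n ≤ m`, and `8·B·log m / n ≤ p ≤ 1`, and let `G` be a random bipartite
graph from the Erdős–Rényi model `G(n,m,p)` (each of the `n·m` edges present
independently with probability `p`).  For any vector `s` of positive integers with
`∑ s_i ≤ m` and `max s_i / min s_i ≤ B`, the probability that `G` contains a
left-saturating `s`-matching is at least `1 - 1/n`. -/
theorem random_graph_sMatching (B : ℝ) (hB : 1 ≤ B) (n m : ℕ) (hnm : n ≤ m)
    (p : ℝ) (hp0 : 8 * B * Real.log m / n ≤ p) (hp1 : p ≤ 1)
    (s : Fin n → ℕ) (hs : ∀ i, 1 ≤ s i) (hsum : ∑ i, s i ≤ m)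
    (hratio : ∀ i j : Fin n, (s i : ℝ) ≤ B * s j) :
    ENNReal.ofReal (1 - 1 / n) ≤
      (Measure.pi fun _ : Fin n => Measure.pi fun _ : Fin m =>
          (PMF.bernoulli (Real.toNNReal p) (Real.toNNReal_le_one.mpr hp1)).toMeasure)
        {G : Fin n → Fin m → Bool |
          ∃ F : Finset (Fin n × Fin m), IsLeftSatSMatching (fun i g => G i g = true) s F} := by
  set ν := (PMF.bernoulli (Real.toNNReal p) (Real.toNNReal_le_one.mpr hp1)).toMeasure
  set μ := Measure.pi fun _ : Fin n => Measure.pi fun _ : Fin m => ν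
  set bad := {G : Fin n → Fin m → Bool |
    ∃ T, #(rightNeighbors (fun i g => G i g = true) T) < ∑ i ∈ T, s i}
  have hgood : badᶜ ⊆ {G | ∃ F, IsLeftSatSMatching (fun i g => G i g = true) s F} :=
    fun G hG => exists_isLeftSatSMatching_of_forall_sum_le_card _ s (by simpa [bad] using hG)
  obtain hn | hn := lt_or_ge n 2
  · interval_cases n
    · have hbad : bad = ∅ := by simp [bad, Subsingleton.elim _ (∅ : Finset (Fin 0))]
      simpa [hbad] using measure_mono (μ := μ) hgood
    · simp
  have hp : 0 ≤ p := le_trans (by positivity) hp0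
  have h1p : 0 ≤ 1 - p := by linarith
  have hbad : μ bad ≤ ENNReal.ofReal (1 / n) := by
    refine (measure_setOf_exists_card_rightNeighbors_lt_le ν s).trans ?_
    rw [PMF.toMeasure_bernoulli_false hp]
    refine le_trans (le_of_eq ?_)
      (ENNReal.ofReal_le_ofReal (sum_choose_mul_one_sub_pow_le hB hn hnm hp0 hp1 hs hsum hratio))
    rw [ENNReal.ofReal_sum_of_nonneg fun T _ => mul_nonneg (Nat.cast_nonneg _) (pow_nonneg h1p _)]
    simp [ENNReal.ofReal_mul, ENNReal.ofReal_pow h1p]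
  calc ENNReal.ofReal (1 - 1 / n) = 1 - ENNReal.ofReal (1 / n) := by
        rw [ENNReal.ofReal_sub _ (by positivity), ENNReal.ofReal_one]
    _ ≤ 1 - μ bad := by gcongr
    _ = μ badᶜ := (prob_compl_eq_one_sub (.of_discrete)).symm
    _ ≤ _ := measure_mono hgood
end

section
/- Let D be an (alpha,beta)-PDF-bounded distribution on [0,1] with mean mu in (0,1), let C >= 1 and epsilon in (0,1) be constants, and consider instances with w_max/w_min <= C, m >= (1+epsilon)*n/(1-mu), and m = O(n log n). Set tau = 1 - 8(C+1)log(m)/(alpha*n), delta = (1 + (epsilon/(1+epsilon))*((1-mu)/mu))*tau - 1, and s_i = ceil((1+delta)*(w_i/W)*(mu*m/tau)) for each agent i. Let G_{>= tau} be the bipartite graph on agents and items with an edge (i,g) if and only if u_i(g) >= tau, where the mn utilities are drawn independently from D. Then, with probability tending to 1 as n tends to infinity, G_{>= tau} contains a left-saturating s-matching. -/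
open Finset MeasureTheory
open scoped ENNReal

/-- A probability distribution `D` on `[0,1]` is `(α,β)`-PDF-bounded if it has a density
`f` (with respect to Lebesgue measure restricted to `[0,1]`) satisfying `α ≤ f(x) ≤ β`
for all `x ∈ [0,1]`.  (Such a distribution is in particular non-atomic.) -/
def PDFBounded (α β : ℝ) (D : MeasureTheory.Measure ℝ) : Prop :=
  ∃ f : ℝ → ℝ≥0∞,
    D = (MeasureTheory.volume.restrict (Set.Icc (0:ℝ) 1)).withDensity f ∧
    ∀ x ∈ Set.Icc (0:ℝ) 1, ENNReal.ofReal α ≤ f x ∧ f x ≤ ENNReal.ofReal β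

/-- The joint distribution of the `n·m` utilities `u i g`, drawn independently from `D`. -/
noncomputable def utilMeasure (n m : ℕ) (D : MeasureTheory.Measure ℝ) :
    MeasureTheory.Measure (Fin n → Fin m → ℝ) :=
  MeasureTheory.Measure.pi fun _ : Fin n => MeasureTheory.Measure.pi fun _ : Fin m => D

open Classical in
lemma exists_sMatching_of_hall {n m : ℕ} (E : Fin n → Fin m → Prop) (s : Fin n → ℕ)
    (h : ∀ S : Finset (Fin n), ∑ i ∈ S, s i ≤ (Finset.univ.filter (fun g => ∃ i ∈ S, E i g)).card) :
    ∃ F : Finset (Fin n × Fin m), IsLeftSatSMatching E s F := by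
  classical
  set t : (Σ i : Fin n, Fin (s i)) → Finset (Fin m) :=
    fun x => Finset.univ.filter (fun g => E x.1 g) with ht
  have hall : ∀ S' : Finset (Σ i : Fin n, Fin (s i)), S'.card ≤ (S'.biUnion t).card := by
    intro S'
    set S : Finset (Fin n) := S'.image Sigma.fst with hS
    have h1 : S'.card ≤ ∑ i ∈ S, s i := by
      have hsub : S' ⊆ S.sigma (fun i => (Finset.univ : Finset (Fin (s i)))) := by
        intro x hx
        simp [Finset.mem_sigma, hS]
        exact ⟨x.2, hx⟩
      calc S'.card ≤ (S.sigma (fun i => (Finset.univ : Finset (Fin (s i))))).card :=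
            Finset.card_le_card hsub
        _ = ∑ i ∈ S, s i := by simp [Finset.card_sigma]
    have h2 : (Finset.univ.filter (fun g => ∃ i ∈ S, E i g)) ⊆ S'.biUnion t := by
      intro g hg
      simp only [Finset.mem_filter] at hg
      obtain ⟨-, i, hiS, hEig⟩ := hg
      rw [hS] at hiS
      obtain ⟨x, hx, rfl⟩ := Finset.mem_image.mp hiS
      exact Finset.mem_biUnion.mpr ⟨x, hx, by simp [ht, hEig]⟩
    calc S'.card ≤ ∑ i ∈ S, s i := h1
      _ ≤ (Finset.univ.filter (fun g => ∃ i ∈ S, E i g)).card := h S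
      _ ≤ (S'.biUnion t).card := Finset.card_le_card h2
  obtain ⟨f, hfinj, hf⟩ := (Finset.all_card_le_biUnion_card_iff_exists_injective t).mp hall
  refine ⟨Finset.univ.image (fun x : Σ i : Fin n, Fin (s i) => (x.1, f x)), ?_, ?_, ?_⟩
  · intro e he
    obtain ⟨x, -, rfl⟩ := Finset.mem_image.mp he
    have := hf x
    simpa [ht] using this
  · intro i
    have himg : ((Finset.univ.image (fun x : Σ i : Fin n, Fin (s i) => (x.1, f x))).filter
        (fun e => e.1 = i)) = (Finset.univ.filter (fun x : Σ i : Fin n, Fin (s i) => x.1 = i)).image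
          (fun x => (x.1, f x)) := by
      ext e
      simp only [Finset.mem_filter, Finset.mem_image, Finset.mem_univ, true_and]
      constructor
      · rintro ⟨⟨x, -, rfl⟩, hx1⟩
        exact ⟨x, hx1, rfl⟩
      · rintro ⟨x, hx1, rfl⟩
        exact ⟨⟨x, by simp⟩, hx1⟩
    rw [himg, Finset.card_image_of_injective]
    · have : (Finset.univ.filter (fun x : Σ i : Fin n, Fin (s i) => x.1 = i)) =
        Finset.univ.image (fun j : Fin (s i) => (⟨i, j⟩ : Σ i : Fin n, Fin (s i))) := by
        ext x
        simp only [Finset.mem_filter, Finset.mem_univ, true_and, Finset.mem_image]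
        constructor
        · rintro rfl
          exact ⟨x.2, rfl⟩
        · rintro ⟨j, rfl⟩; rfl
      rw [this, Finset.card_image_of_injective, Finset.card_univ, Fintype.card_fin]
      intro a b hab
      have := (Sigma.mk.inj_iff.mp hab).2
      simpa using this
    · intro a b hab
      have h2 := congrArg Prod.snd hab
      exact hfinj h2
  · intro g
    refine Finset.card_le_one.mpr ?_
    intro e he e' he'
    simp only [Finset.mem_filter, Finset.mem_image, Finset.mem_univ, true_and] at he he'
    obtain ⟨⟨x, -, rfl⟩, hx2⟩ := he
    obtain ⟨⟨y, -, rfl⟩, hy2⟩ := he'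
    have : f x = f y := by simp only [] at hx2 hy2; rw [hx2, hy2]
    rw [hfinj this]

lemma measure_cyl {n m : ℕ} (D : Measure ℝ) [IsProbabilityMeasure D] (τ : ℝ)
    (S : Finset (Fin n)) (U : Finset (Fin m)) :
    utilMeasure n m D {u | ∀ i ∈ S, ∀ g ∈ U, u i g < τ}
      = (D (Set.Iio τ)) ^ (S.card * U.card) := by
  classical
  have hUset : {v : Fin m → ℝ | ∀ g ∈ U, v g < τ} =
      Set.pi Set.univ (fun g => if g ∈ U then Set.Iio τ else Set.univ) := by
    ext v
    simp only [Set.mem_setOf_eq, Set.mem_pi, Set.mem_univ, true_implies]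
    constructor
    · intro hv g; split_ifs with hg
      · exact hv g hg
      · trivial
    · intro hv g hg; have := hv g; rwa [if_pos hg] at this
  have hset : {u : Fin n → Fin m → ℝ | ∀ i ∈ S, ∀ g ∈ U, u i g < τ} =
      Set.pi Set.univ (fun i => if i ∈ S
        then Set.pi Set.univ (fun g => if g ∈ U then Set.Iio τ else Set.univ)
        else Set.univ) := by
    ext u
    simp only [Set.mem_setOf_eq, Set.mem_pi, Set.mem_univ, true_implies]
    constructor
    · intro hu i; split_ifs with hi
      · rw [← hUset]; exact fun g hg => hu i hi g hg
      · trivial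
    · intro hu i hi
      have := hu i; rw [if_pos hi, ← hUset] at this
      exact this
  have hinner : (Measure.pi fun _ : Fin m => D)
      (Set.pi Set.univ (fun g => if g ∈ U then Set.Iio τ else Set.univ))
      = (D (Set.Iio τ)) ^ U.card := by
    rw [Measure.pi_pi]
    have : ∀ g : Fin m, D (if g ∈ U then Set.Iio τ else Set.univ)
        = if g ∈ U then D (Set.Iio τ) else 1 := by
      intro g; split_ifs <;> simp
    rw [Finset.prod_congr rfl (fun g _ => this g),
      Finset.prod_ite_mem Finset.univ U (fun _ => D (Set.Iio τ)),
      Finset.univ_inter, Finset.prod_const]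
  rw [hset, utilMeasure, Measure.pi_pi]
  have : ∀ i : Fin n, (Measure.pi fun _ : Fin m => D)
      (if i ∈ S then Set.pi Set.univ (fun g => if g ∈ U then Set.Iio τ else Set.univ)
        else Set.univ) = if i ∈ S then (D (Set.Iio τ)) ^ U.card else 1 := by
    intro i; split_ifs
    · exact hinner
    · simp
  rw [Finset.prod_congr rfl (fun i _ => this i),
    Finset.prod_ite_mem Finset.univ S (fun _ => (D (Set.Iio τ)) ^ U.card),
    Finset.univ_inter, Finset.prod_const, ← pow_mul, Nat.mul_comm]

lemma tail_lower {α β : ℝ} (hα : 0 ≤ α) {D : Measure ℝ} (hD : PDFBounded α β D)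
    {τ : ℝ} (hτ0 : 0 ≤ τ) (hτ1 : τ ≤ 1) :
    ENNReal.ofReal (α * (1 - τ)) ≤ D (Set.Ici τ) := by
  obtain ⟨f, hDf, hf⟩ := hD
  have hsub : Set.Icc τ 1 ⊆ Set.Icc (0:ℝ) 1 := Set.Icc_subset_Icc hτ0 le_rfl
  have h1 : D (Set.Icc τ 1) ≤ D (Set.Ici τ) := measure_mono Set.Icc_subset_Ici_self
  refine le_trans ?_ h1
  rw [hDf, withDensity_apply _ measurableSet_Icc]
  have hres : (MeasureTheory.volume.restrict (Set.Icc (0:ℝ) 1)).restrict (Set.Icc τ 1)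
      = MeasureTheory.volume.restrict (Set.Icc τ 1) := by
    rw [Measure.restrict_restrict measurableSet_Icc, Set.inter_eq_left.mpr hsub]
  rw [hres]
  have hae : ∀ᵐ x ∂(MeasureTheory.volume.restrict (Set.Icc τ 1)),
      ENNReal.ofReal α ≤ f x := by
    filter_upwards [ae_restrict_mem measurableSet_Icc] with x hx
    exact (hf x (hsub hx)).1
  calc ENNReal.ofReal (α * (1 - τ))
      = ENNReal.ofReal α * ENNReal.ofReal (1 - τ) := by
        rw [← ENNReal.ofReal_mul hα]
    _ = ∫⁻ _ in Set.Icc τ 1, ENNReal.ofReal α := by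
        rw [MeasureTheory.setLIntegral_const, Real.volume_Icc]
    _ ≤ ∫⁻ x in Set.Icc τ 1, f x := lintegral_mono_ae hae

lemma key_ineq (K B kk nn mm u σ : ℝ)
    (hK : 2 ≤ K) (hB1 : 1 ≤ B) (hBK : B ≤ K)
    (hn : 1 ≤ nn) (hnm : nn ≤ mm)
    (hk1 : 1 ≤ kk) (hkn : kk ≤ nn)
    (hσ : σ * nn ≤ kk * B * mm)
    (hu : u = mm + 1 - σ) (hu1 : 1 ≤ u) (hukn : nn - kk + 1 ≤ u) :
    min kk (nn - kk) + min u (σ - 1) + 3 ≤ 8 * K * kk * u / nn := by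
  have hn0 : (0:ℝ) < nn := by linarith
  have hB0 : (0:ℝ) < B := by linarith
  rw [le_div_iff₀ hn0]
  rcases le_or_gt (2 * B * kk) nn with hcase | hcase
  · -- small k
    have hσ2 : 2 * σ ≤ mm := by nlinarith
    have hum : mm / 2 + 1 ≤ u := by rw [hu]; linarith
    have hLHS : min kk (nn - kk) + min u (σ - 1) + 3 ≤ kk + (σ - 1) + 3 := by
      have := min_le_left kk (nn - kk)
      have := min_le_right u (σ - 1)
      linarith
    have hmono : (min kk (nn - kk) + min u (σ - 1) + 3) * nn ≤ (kk + σ + 2) * nn := by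
      nlinarith
    refine hmono.trans ?_
    have l1 : kk * nn ≤ kk * mm := by nlinarith
    have hkk0 : (0:ℝ) ≤ kk := by linarith
    have hmm0 : (0:ℝ) ≤ mm := by linarith
    have l2 : σ * nn ≤ K * (kk * mm) := by
      nlinarith [mul_nonneg (mul_nonneg (sub_nonneg.mpr hBK) hkk0) hmm0]
    have l3 : 2 * nn ≤ 2 * (kk * mm) := by nlinarith
    have hK0 : (0:ℝ) ≤ K := by linarith
    have hr : 4 * K * (kk * mm) ≤ 8 * K * kk * u := by
      nlinarith [mul_nonneg (mul_nonneg hK0 hkk0) (by linarith : (0:ℝ) ≤ u - mm / 2)]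
    nlinarith
  · -- big k
    have h1 : min kk (nn - kk) ≤ u - 1 := by
      have := min_le_right kk (nn - kk)
      linarith
    have h2 : min u (σ - 1) ≤ u := min_le_left _ _
    have hLHS : min kk (nn - kk) + min u (σ - 1) + 3 ≤ 2 * u + 2 := by linarith
    have hu0 : (0:ℝ) < u := by linarith
    have e1 : (2 * u + 2) * nn ≤ 4 * u * nn := by nlinarith
    have e2 : 4 * u * nn ≤ 8 * B * kk * u := by nlinarith
    have e3 : 8 * B * kk * u ≤ 8 * K * kk * u := by nlinarith
    nlinarith

lemma term_bound (n M k u σ : ℕ) (q K B : ℝ)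
    (hq0 : 0 ≤ q) (hq : q ≤ Real.exp (-(8 * K * Real.log M / n)))
    (hK : 2 ≤ K) (hB1 : 1 ≤ B) (hBK : B ≤ K)
    (hn : 1 ≤ n) (hnM : n ≤ M) (hM2 : 2 ≤ M)
    (hk1 : 1 ≤ k) (hkn : k ≤ n)
    (hσ : (σ:ℝ) * n ≤ k * B * M)
    (hσM : σ ≤ M) (hkσ : k ≤ σ)
    (hu : u = M + 1 - σ)
    (hukn : n + 1 ≤ u + k) :
    (n.choose k : ℝ) * (M.choose u) * q ^ (k * u) ≤ ((M:ℝ)⁻¹) ^ 3 := by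
  have hM0 : (0:ℝ) < M := by positivity
  have hL0 : 0 < Real.log M := Real.log_pos (by exact_mod_cast hM2)
  set L := Real.log M with hLdef
  have hexpL : Real.exp L = M := Real.exp_log hM0
  set a := min k (n - k) with ha
  set v := min u (σ - 1) with hv
  have hu1 : 1 ≤ u := by omega
  have huM : u ≤ M := by omega
  -- choose bounds
  have c1 : (n.choose k : ℝ) ≤ (M:ℝ) ^ a := by
    have h1 : n.choose k ≤ M ^ a := by
      rcases min_cases k (n - k) with ⟨hmin, _⟩ | ⟨hmin, _⟩
      · rw [ha, hmin]
        exact le_trans (Nat.choose_le_pow n k) (Nat.pow_le_pow_left hnM k)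
      · rw [ha, hmin, ← Nat.choose_symm hkn]
        exact le_trans (Nat.choose_le_pow n (n - k)) (Nat.pow_le_pow_left hnM (n - k))
    exact_mod_cast Nat.cast_le.mpr h1
  have c2 : (M.choose u : ℝ) ≤ (M:ℝ) ^ v := by
    have hMu : M - u = σ - 1 := by omega
    have h1 : M.choose u ≤ M ^ v := by
      rcases min_cases u (σ - 1) with ⟨hmin, _⟩ | ⟨hmin, _⟩
      · rw [hv, hmin]
        exact Nat.choose_le_pow M u
      · rw [hv, hmin, ← hMu, ← Nat.choose_symm huM]
        exact Nat.choose_le_pow M (M - u)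
    exact_mod_cast Nat.cast_le.mpr h1
  have c3 : q ^ (k * u) ≤ Real.exp (-(8 * K * L / n) * (k * u)) := by
    calc q ^ (k * u) ≤ (Real.exp (-(8 * K * L / n))) ^ (k * u) :=
          pow_le_pow_left₀ hq0 hq _
      _ = Real.exp (-(8 * K * L / n) * (k * u)) := by
          rw [← Real.exp_nat_mul]; congr 1; push_cast; ring
  have hpow : ∀ b : ℕ, ((M:ℝ)) ^ b = Real.exp (b * L) := by
    intro b
    rw [← hexpL, ← Real.exp_nat_mul]
  -- the exponent inequality
  have hkey : (a:ℝ) + v + 3 ≤ 8 * K * k * u / n := by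
    have hnn : (1:ℝ) ≤ n := by exact_mod_cast hn
    have hureal : (u:ℝ) = (M:ℝ) + 1 - σ := by
      rw [hu, Nat.cast_sub (by omega : σ ≤ M + 1)]; push_cast; ring
    have huknr : (n:ℝ) - k + 1 ≤ u := by
      have h : (n:ℝ) + 1 ≤ u + k := by exact_mod_cast hukn
      linarith
    have hmain := key_ineq K B k n M u σ hK hB1 hBK hnn (by exact_mod_cast hnM)
      (by exact_mod_cast hk1) (by exact_mod_cast hkn) hσ
      hureal (by exact_mod_cast hu1) huknr
    have ha' : (a:ℝ) = min (k:ℝ) ((n:ℝ) - k) := by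
      rw [ha, Nat.cast_min, Nat.cast_sub hkn]
    have hv' : (v:ℝ) = min (u:ℝ) ((σ:ℝ) - 1) := by
      rw [hv, Nat.cast_min, Nat.cast_sub (by omega : 1 ≤ σ)]
      norm_num
    rw [ha', hv']
    linarith
  -- final assembly
  have hfin : (n.choose k : ℝ) * (M.choose u) * q ^ (k * u)
      ≤ Real.exp ((a:ℝ) * L) * Real.exp ((v:ℝ) * L) * Real.exp (-(8 * K * L / n) * (k * u)) := by
    rw [← hpow a, ← hpow v]
    have h1 : (n.choose k : ℝ) * (M.choose u) ≤ (M:ℝ) ^ a * (M:ℝ) ^ v := by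
      apply mul_le_mul c1 c2 (by positivity) (by positivity)
    apply mul_le_mul h1 c3 (by positivity) (by positivity)
  refine hfin.trans ?_
  rw [← Real.exp_add, ← Real.exp_add]
  have hinv : ((M:ℝ)⁻¹) ^ 3 = Real.exp (-(3 * L)) := by
    rw [← hexpL, ← Real.exp_neg, ← Real.exp_nat_mul]
    norm_num
  rw [hinv]
  apply Real.exp_le_exp.mpr
  have hnn0 : (0:ℝ) < n := by exact_mod_cast hn
  have h8 : ((a:ℝ) + v + 3) * L ≤ (8 * K * k * u / n) * L :=
    mul_le_mul_of_nonneg_right hkey (le_of_lt hL0)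
  have heq : -(8 * K * L / n) * (k * u) = -((8 * K * k * u / n) * L) := by
    ring
  rw [heq]
  nlinarith [h8]

lemma prob_bound (n M : ℕ) (D : Measure ℝ) [IsProbabilityMeasure D] (τ : ℝ) (s : Fin n → ℕ) :
    1 - ∑ S ∈ (Finset.univ : Finset (Fin n)).powerset,
        (M.choose (M + 1 - ∑ i ∈ S, s i) : ℝ≥0∞) *
          (D (Set.Iio τ)) ^ (S.card * (M + 1 - ∑ i ∈ S, s i))
      ≤ utilMeasure n M D
          {u | ∃ F : Finset (Fin n × Fin M),
            IsLeftSatSMatching (fun i g => τ ≤ u i g) s F} := by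
  classical
  haveI : IsProbabilityMeasure (utilMeasure n M D) := by
    unfold utilMeasure; infer_instance
  set σ : Finset (Fin n) → ℕ := fun S => ∑ i ∈ S, s i with hσ
  set Bad : Set (Fin n → Fin M → ℝ) :=
    ⋃ S ∈ ((Finset.univ : Finset (Fin n)).powerset : Finset (Finset (Fin n))),
      ⋃ U ∈ Finset.powersetCard (M + 1 - σ S) (Finset.univ : Finset (Fin M)),
        {u : Fin n → Fin M → ℝ | ∀ i ∈ S, ∀ g ∈ U, u i g < τ} with hBad
  have hsub : Badᶜ ⊆ {u | ∃ F : Finset (Fin n × Fin M),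
      IsLeftSatSMatching (fun i g => τ ≤ u i g) s F} := by
    intro u hu
    have hnotbad : ∀ S : Finset (Fin n), ∀ U ∈ Finset.powersetCard (M + 1 - σ S)
        (Finset.univ : Finset (Fin M)), ¬(∀ i ∈ S, ∀ g ∈ U, u i g < τ) := by
      intro S U hU hall
      apply hu
      rw [hBad]
      refine Set.mem_iUnion₂.mpr ⟨S, by simp, Set.mem_iUnion₂.mpr ⟨U, hU, hall⟩⟩
    apply exists_sMatching_of_hall
    intro S
    by_contra hviol
    push_neg at hviol
    set NS := Finset.univ.filter (fun g => ∃ i ∈ S, τ ≤ u i g) with hNS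
    have hσM : σ S ≤ M := by
      by_contra hgt
      push_neg at hgt
      have h0 : M + 1 - σ S = 0 := by omega
      refine hnotbad S ∅ ?_ (by simp)
      rw [h0]
      simp
    have hcard : M + 1 - σ S ≤ (Finset.univ \ NS).card := by
      have h1 : NS.card < σ S := hviol
      have h2 : (Finset.univ \ NS).card = M - NS.card := by
        rw [Finset.card_sdiff_of_subset (Finset.subset_univ _), Finset.card_univ, Fintype.card_fin]
      omega
    obtain ⟨U, hUsub, hUcard⟩ := Finset.exists_subset_card_eq hcard
    refine hnotbad S U (Finset.mem_powersetCard.mpr ⟨Finset.subset_univ _, hUcard⟩) ?_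
    intro i hi g hg
    have hgNS : g ∉ NS := fun hmem => (Finset.mem_sdiff.mp (hUsub hg)).2 hmem
    rw [hNS] at hgNS
    simp only [Finset.mem_filter, Finset.mem_univ, true_and, not_exists] at hgNS
    exact lt_of_not_ge (fun hle => hgNS i ⟨hi, hle⟩)
  have hBadle : utilMeasure n M D Bad ≤
      ∑ S ∈ (Finset.univ : Finset (Fin n)).powerset,
        (M.choose (M + 1 - σ S) : ℝ≥0∞) * (D (Set.Iio τ)) ^ (S.card * (M + 1 - σ S)) := by
    rw [hBad]
    refine le_trans (measure_biUnion_finset_le _ _) (Finset.sum_le_sum fun S _ => ?_)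
    refine le_trans (measure_biUnion_finset_le _ _) ?_
    have heach : ∀ U ∈ Finset.powersetCard (M + 1 - σ S) (Finset.univ : Finset (Fin M)),
        utilMeasure n M D {u : Fin n → Fin M → ℝ | ∀ i ∈ S, ∀ g ∈ U, u i g < τ}
          = (D (Set.Iio τ)) ^ (S.card * (M + 1 - σ S)) := by
      intro U hU
      rw [measure_cyl, (Finset.mem_powersetCard.mp hU).2]
    rw [Finset.sum_congr rfl heach, Finset.sum_const, Finset.card_powersetCard,
      Finset.card_univ, Fintype.card_fin, nsmul_eq_mul]
  calc (1:ℝ≥0∞) - ∑ S ∈ (Finset.univ : Finset (Fin n)).powerset,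
        (M.choose (M + 1 - σ S) : ℝ≥0∞) * (D (Set.Iio τ)) ^ (S.card * (M + 1 - σ S))
      ≤ 1 - utilMeasure n M D Bad := tsub_le_tsub_left hBadle 1
    _ ≤ utilMeasure n M D Badᶜ := by
        rw [tsub_le_iff_right]
        calc (1:ℝ≥0∞) = utilMeasure n M D Set.univ := measure_univ.symm
          _ = utilMeasure n M D (Badᶜ ∪ Bad) := by rw [Set.compl_union_self]
          _ ≤ _ := measure_union_le _ _
    _ ≤ _ := measure_mono hsub

lemma sum_bound (n M : ℕ) (q K B : ℝ) (s : Fin n → ℕ)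
    (hq0 : 0 ≤ q) (hq : q ≤ Real.exp (-(8 * K * Real.log M / n)))
    (hK : 2 ≤ K) (hB1 : 1 ≤ B) (hBK : B ≤ K)
    (hn : 1 ≤ n) (hnM : n ≤ M) (hM2 : 2 ≤ M)
    (hs1 : ∀ i, 1 ≤ s i)
    (hsB : ∀ i, (s i : ℝ) * n ≤ B * M)
    (hsM : ∑ i, s i ≤ M) :
    ∑ S ∈ (Finset.univ : Finset (Fin n)).powerset,
        (M.choose (M + 1 - ∑ i ∈ S, s i) : ℝ≥0∞) *
          (ENNReal.ofReal q) ^ (S.card * (M + 1 - ∑ i ∈ S, s i))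
      ≤ (n + 1 : ℝ≥0∞) * ENNReal.ofReal (((M:ℝ)⁻¹) ^ 3) := by
  classical
  have hterm : ∀ S ∈ (Finset.univ : Finset (Fin n)).powerset,
      (M.choose (M + 1 - ∑ i ∈ S, s i) : ℝ≥0∞) *
          (ENNReal.ofReal q) ^ (S.card * (M + 1 - ∑ i ∈ S, s i))
        ≤ ENNReal.ofReal (((M:ℝ)⁻¹) ^ 3 / (n.choose S.card)) := by
    intro S _
    rcases Nat.eq_zero_or_pos S.card with hS0 | hSpos
    · have hSempty : S = ∅ := Finset.card_eq_zero.mp hS0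
      have : (M + 1 - ∑ i ∈ S, s i) = M + 1 := by rw [hSempty]; simp
      rw [this]
      have : M.choose (M + 1) = 0 := Nat.choose_eq_zero_of_lt (by omega)
      rw [this]
      simp
    · set k := S.card with hk
      set σS := ∑ i ∈ S, s i with hσS
      set u := M + 1 - σS with hu
      have hσM : σS ≤ M := le_trans (Finset.sum_le_sum_of_subset (Finset.subset_univ S)) hsM
      have hkσ : k ≤ σS := by
        calc k = ∑ _i ∈ S, 1 := by rw [hk]; simp
          _ ≤ σS := Finset.sum_le_sum (fun i _ => hs1 i)
      have hσr : (σS:ℝ) * n ≤ k * B * M := by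
        have : (σS:ℝ) = ∑ i ∈ S, (s i : ℝ) := by rw [hσS]; push_cast; ring
        rw [this, Finset.sum_mul]
        calc ∑ i ∈ S, (s i : ℝ) * n ≤ ∑ _i ∈ S, B * M :=
              Finset.sum_le_sum (fun i _ => hsB i)
          _ = k * (B * M) := by rw [Finset.sum_const, hk]; push_cast; ring
          _ = k * B * M := by ring
      have hukn : n + 1 ≤ u + k := by
        have hcompl : σS + ∑ i ∈ Sᶜ, s i = ∑ i, s i := by
          rw [hσS]; exact Finset.sum_add_sum_compl S s
        have hcompl2 : n - k ≤ ∑ i ∈ Sᶜ, s i := by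
          calc n - k = Sᶜ.card := by rw [Finset.card_compl, hk, Fintype.card_fin]
            _ = ∑ _i ∈ Sᶜ, 1 := by simp
            _ ≤ _ := Finset.sum_le_sum (fun i _ => hs1 i)
        have hkn : k ≤ n := by rw [hk]; simpa using Finset.card_le_univ S
        omega
      have hkn : k ≤ n := by rw [hk]; simpa using Finset.card_le_univ S
      have hchoosepos : 0 < (n.choose k : ℝ) := by
        exact_mod_cast Nat.choose_pos hkn
      have hreal := term_bound n M k u σS q K B hq0 hq hK hB1 hBK hn hnM hM2
        hSpos hkn hσr hσM hkσ rfl hukn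
      have hdiv : (M.choose u : ℝ) * q ^ (k * u) ≤ ((M:ℝ)⁻¹) ^ 3 / (n.choose k) := by
        rw [le_div_iff₀ hchoosepos]
        nlinarith [hreal]
      calc (M.choose u : ℝ≥0∞) * (ENNReal.ofReal q) ^ (k * u)
          = ENNReal.ofReal ((M.choose u : ℝ) * q ^ (k * u)) := by
            rw [ENNReal.ofReal_mul (by positivity), ENNReal.ofReal_pow hq0,
              ENNReal.ofReal_natCast]
        _ ≤ _ := ENNReal.ofReal_le_ofReal hdiv
  refine le_trans (Finset.sum_le_sum hterm) ?_
  rw [Finset.sum_powerset_apply_card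
    (fun j => ENNReal.ofReal (((M:ℝ)⁻¹) ^ 3 / (n.choose j)))]
  have hj : ∀ j ∈ Finset.range ((Finset.univ : Finset (Fin n)).card + 1),
      ((Finset.univ : Finset (Fin n)).card.choose j) •
          ENNReal.ofReal (((M:ℝ)⁻¹) ^ 3 / (n.choose j))
        ≤ ENNReal.ofReal (((M:ℝ)⁻¹) ^ 3) := by
    intro j hj
    rw [Finset.card_univ, Fintype.card_fin] at hj ⊢
    have hjn : j ≤ n := by rw [Finset.mem_range] at hj; omega
    have hcpos : (0:ℝ) < n.choose j := by exact_mod_cast Nat.choose_pos hjn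
    rw [nsmul_eq_mul, ← ENNReal.ofReal_natCast, ← ENNReal.ofReal_mul (by positivity)]
    apply ENNReal.ofReal_le_ofReal
    rw [mul_div_assoc']
    rw [mul_comm]
    rw [mul_div_assoc]
    rw [div_self (ne_of_gt hcpos), mul_one]
  calc ∑ j ∈ Finset.range ((Finset.univ : Finset (Fin n)).card + 1),
        ((Finset.univ : Finset (Fin n)).card.choose j) •
          ENNReal.ofReal (((M:ℝ)⁻¹) ^ 3 / (n.choose j))
      ≤ ∑ _j ∈ Finset.range ((Finset.univ : Finset (Fin n)).card + 1),
          ENNReal.ofReal (((M:ℝ)⁻¹) ^ 3) := Finset.sum_le_sum hj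
    _ = (n + 1 : ℝ≥0∞) * ENNReal.ofReal (((M:ℝ)⁻¹) ^ 3) := by
        rw [Finset.sum_const, Finset.card_range, Finset.card_univ, Fintype.card_fin,
          nsmul_eq_mul]
        push_cast
        ring

set_option maxHeartbeats 2000000 in
/-- Let `D` be an `(α,β)`-PDF-bounded distribution with mean `μ ∈ (0,1)`, `C ≥ 1`,
`ε ∈ (0,1)`, and consider instances with weight ratio at most `C`,
`m ≥ (1+ε)·n/(1-μ)`, and `m = O(n log n)`.  With
`τ = 1 - 8(C+1)·log m/(α n)`, `δ = (1 + (ε/(1+ε))·((1-μ)/μ))·τ - 1`, and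
`s_i = ⌈(1+δ)·(w_i/W)·(μ m/τ)⌉`, the bipartite graph `G_{≥τ}` (with an edge between
agent `i` and item `g` iff `u_i(g) ≥ τ`) contains a left-saturating `s`-matching with
probability tending to `1` as `n → ∞`. -/
theorem threshold_graph_sMatching (α β : ℝ) (hα : 0 < α) (hβ : 0 < β)
    (D : Measure ℝ) [IsProbabilityMeasure D] (hD : PDFBounded α β D)
    (mu : ℝ) (hmu : 0 < mu) (hmu1 : mu < 1) (hmean : ∫ x, x ∂D = mu)
    (C : ℝ) (hC : 1 ≤ C) (ε : ℝ) (hε : 0 < ε) (hε1 : ε < 1)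
    (m : ℕ → ℕ) (w : (n : ℕ) → Fin n → ℝ)
    (hw : ∀ n, ∀ i, 0 < w n i)
    (hratio : ∀ n, ∀ i j : Fin n, w n i ≤ C * w n j)
    (hm : ∀ n : ℕ, (1 + ε) * n / (1 - mu) ≤ (m n : ℝ))
    (hmO : ∃ c : ℝ, 0 < c ∧ ∀ᶠ n in Filter.atTop, (m n : ℝ) ≤ c * n * Real.log n) :
    Filter.Tendsto
      (fun n =>
        utilMeasure n (m n) D
          {u : Fin n → Fin (m n) → ℝ |
            ∃ F : Finset (Fin n × Fin (m n)),
              IsLeftSatSMatching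
                (fun i g => 1 - 8 * (C + 1) * Real.log (m n) / (α * n) ≤ u i g)
                (fun i =>
                  ⌈(1 + ((1 + ε / (1 + ε) * ((1 - mu) / mu)) *
                        (1 - 8 * (C + 1) * Real.log (m n) / (α * n)) - 1)) *
                      (w n i / ∑ j, w n j) *
                      (mu * m n / (1 - 8 * (C + 1) * Real.log (m n) / (α * n)))⌉₊)
                F})
      Filter.atTop (nhds 1) := by
  classical
  obtain ⟨c, hc0, hmc⟩ := hmO
  have hμ1 : (0:ℝ) < 1 - mu := by linarith
  have hε0 : (0:ℝ) < 1 + ε := by linarith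
  obtain ⟨ρ, hρdef⟩ : ∃ x : ℝ, x = mu + ε * (1 - mu) / (1 + ε) := ⟨_, rfl⟩
  have hρ0 : 0 < ρ := by
    rw [hρdef]
    have := div_pos (mul_pos hε hμ1) hε0
    linarith
  have h1εne : (1:ℝ) + ε ≠ 0 := ne_of_gt hε0
  have hmune : mu ≠ 0 := ne_of_gt hmu
  have hρcompl : 1 - ρ = (1 - mu) / (1 + ε) := by
    rw [hρdef]; field_simp; ring
  have hρ1 : ρ < 1 := by
    have h0 := div_pos hμ1 hε0
    linarith [hρcompl, h0]
  set K : ℝ := C + 1 with hKdef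
  set B : ℝ := ρ * C + 1 with hBdef
  have hK2 : 2 ≤ K := by rw [hKdef]; linarith
  have hB1 : 1 ≤ B := by rw [hBdef]; nlinarith
  have hBK : B ≤ K := by rw [hBdef, hKdef]; nlinarith
  -- n ≤ m n for n ≥ 1 (indeed all n)
  have hnM : ∀ n : ℕ, (n:ℝ) ≤ m n := by
    intro n
    refine le_trans ?_ (hm n)
    rw [le_div_iff₀ hμ1]
    nlinarith [Nat.cast_nonneg (α := ℝ) n]
  have hnMnat : ∀ n : ℕ, n ≤ m n := fun n => by exact_mod_cast hnM n
  -- eventually: the threshold gap is small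
  have hloglim : Filter.Tendsto (fun n : ℕ => Real.log n / n) Filter.atTop (nhds 0) := by
    have h1 : Filter.Tendsto (fun x : ℝ => Real.log x / x) Filter.atTop (nhds 0) :=
      Real.isLittleO_log_id_atTop.tendsto_div_nhds_zero
    exact h1.comp tendsto_natCast_atTop_atTop
  have hclog : ∀ᶠ n : ℕ in Filter.atTop, c * Real.log n ≤ n := by
    have h2 : ∀ᶠ n : ℕ in Filter.atTop, Real.log n / n < 1 / c :=
      hloglim.eventually_lt_const (by positivity)
    filter_upwards [h2, Filter.eventually_ge_atTop 1] with n hn hn1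
    have hn0 : (0:ℝ) < n := by exact_mod_cast hn1
    rw [div_lt_div_iff₀ hn0 hc0] at hn
    nlinarith
  have hlogm : ∀ᶠ n : ℕ in Filter.atTop, Real.log (m n) ≤ 2 * Real.log n := by
    filter_upwards [hmc, hclog, Filter.eventually_ge_atTop 1] with n h1 h2 hn1
    have hn0 : (0:ℝ) < n := by exact_mod_cast hn1
    have hmn2 : (m n : ℝ) ≤ (n:ℝ) ^ 2 := by nlinarith [Real.log_nonneg (by exact_mod_cast hn1 : (1:ℝ) ≤ n)]
    have hm1 : (0:ℝ) < m n := lt_of_lt_of_le hn0 (hnM n)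
    calc Real.log (m n) ≤ Real.log ((n:ℝ)^2) := Real.log_le_log hm1 hmn2
      _ = 2 * Real.log n := by rw [Real.log_pow]; push_cast; ring
  have hsmall : ∀ᶠ n : ℕ in Filter.atTop,
      8 * K * Real.log (m n) / (α * n) ≤ 1 / 2 := by
    have h4 : Filter.Tendsto (fun n : ℕ => (16 * K / α) * (Real.log n / n))
        Filter.atTop (nhds 0) := by
      have := hloglim.const_mul (16 * K / α)
      simpa using this
    have h5 : ∀ᶠ n : ℕ in Filter.atTop, (16 * K / α) * (Real.log n / n) < 1 / 2 :=
      h4.eventually_lt_const (by norm_num)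
    filter_upwards [h5, hlogm, Filter.eventually_ge_atTop 1] with n h5 hlm hn1
    have hn0 : (0:ℝ) < n := by exact_mod_cast hn1
    have hK0 : (0:ℝ) < K := by linarith
    calc 8 * K * Real.log (m n) / (α * n) ≤ 8 * K * (2 * Real.log n) / (α * n) := by
          apply div_le_div_of_nonneg_right ?_ (by positivity) |>.trans_eq rfl
          nlinarith
      _ = (16 * K / α) * (Real.log n / n) := by field_simp; ring
      _ ≤ 1 / 2 := le_of_lt h5
  -- squeeze
  apply tendsto_of_tendsto_of_tendsto_of_le_of_le'
    (g := fun n : ℕ => 1 - ENNReal.ofReal (2 / (n:ℝ)))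
    (h := fun _ : ℕ => (1:ℝ≥0∞))
  · -- g tends to 1
    have h0 : Filter.Tendsto (fun n : ℕ => ENNReal.ofReal (2 / (n:ℝ)))
        Filter.atTop (nhds 0) := by
      rw [← ENNReal.ofReal_zero]
      apply ENNReal.tendsto_ofReal
      exact tendsto_const_div_atTop_nhds_zero_nat 2
    have := ENNReal.Tendsto.sub (tendsto_const_nhds (x := (1:ℝ≥0∞))) h0
      (Or.inl ENNReal.one_ne_top)
    simpa using this
  · exact tendsto_const_nhds
  · -- lower bound eventually
    filter_upwards [hsmall, hlogm, Filter.eventually_ge_atTop 2] with n hs hlm hn2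
    have hn1 : 1 ≤ n := by omega
    have hn0 : (0:ℝ) < n := by exact_mod_cast (by omega : 0 < n)
    have hM2 : 2 ≤ m n := le_trans hn2 (hnMnat n)
    have hM0 : (0:ℝ) < m n := lt_of_lt_of_le hn0 (hnM n)
    have hlogM0 : 0 ≤ Real.log (m n) := Real.log_nonneg (by exact_mod_cast (by omega : 1 ≤ m n))
    have hgap0 : 0 ≤ 8 * K * Real.log (m n) / (α * n) := by positivity
    -- the threshold
    set τ : ℝ := 1 - 8 * K * Real.log (m n) / (α * ↑n) with hτdef
    have hτ1 : τ ≤ 1 := by rw [hτdef]; linarith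
    have hτhalf : 1 / 2 ≤ τ := by rw [hτdef]; linarith
    have hτ0 : 0 < τ := lt_of_lt_of_le one_half_pos hτhalf
    have hτne : τ ≠ 0 := ne_of_gt hτ0
    -- weights
    set W : ℝ := ∑ j, w n j with hWdef
    haveI : NeZero n := ⟨by omega⟩
    have hW0 : 0 < W := by
      rw [hWdef]
      apply Finset.sum_pos (fun i _ => hw n i)
      exact ⟨⟨0, by omega⟩, Finset.mem_univ _⟩
    have hwW0 : ∀ i, 0 < w n i / W := fun i => div_pos (hw n i) hW0
    have hwWC : ∀ i : Fin n, (w n i / W) * n ≤ C := by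
      intro i
      rw [div_mul_eq_mul_div, div_le_iff₀ hW0]
      calc w n i * n = ∑ _j : Fin n, w n i := by
            rw [Finset.sum_const, Finset.card_univ, Fintype.card_fin, nsmul_eq_mul]; ring
        _ ≤ ∑ j : Fin n, C * w n j := Finset.sum_le_sum (fun j _ => hratio n i j)
        _ = C * W := by rw [hWdef, Finset.mul_sum]
    -- the s function
    set sn : Fin n → ℕ := fun i =>
      ⌈(1 + ((1 + ε / (1 + ε) * ((1 - mu) / mu)) * τ - 1)) *
        (w n i / W) * (mu * ↑(m n) / τ)⌉₊ with hsndef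
    have hsreal : ∀ i : Fin n,
        (1 + ((1 + ε / (1 + ε) * ((1 - mu) / mu)) * τ - 1)) *
          (w n i / W) * (mu * ↑(m n) / τ) = ρ * ↑(m n) * (w n i / W) := by
      intro i
      have h2 : (1 + ε / (1 + ε) * ((1 - mu) / mu)) * mu = ρ := by
        rw [hρdef]; field_simp
      have hττ : τ * τ⁻¹ = 1 := mul_inv_cancel₀ hτne
      calc (1 + ((1 + ε / (1 + ε) * ((1 - mu) / mu)) * τ - 1)) *
            (w n i / W) * (mu * ↑(m n) / τ)
          = ((1 + ε / (1 + ε) * ((1 - mu) / mu)) * mu) * ↑(m n) * (w n i / W) *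
              (τ * τ⁻¹) := by
            rw [div_eq_mul_inv (mu * (↑(m n) : ℝ)) τ]; ring
        _ = ((1 + ε / (1 + ε) * ((1 - mu) / mu)) * mu) * ↑(m n) * (w n i / W) := by
            rw [hττ, mul_one]
        _ = ρ * ↑(m n) * (w n i / W) := by rw [h2]
    have hsn_eq : ∀ i, sn i = ⌈ρ * ↑(m n) * (w n i / W)⌉₊ := by
      intro i; rw [hsndef]; exact congrArg Nat.ceil (hsreal i)
    have hx0 : ∀ i : Fin n, 0 < ρ * ↑(m n) * (w n i / W) := by
      intro i
      exact mul_pos (mul_pos hρ0 hM0) (hwW0 i)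
    have hs1 : ∀ i, 1 ≤ sn i := by
      intro i
      rw [hsn_eq i]
      exact Nat.one_le_iff_ne_zero.mpr (Nat.pos_iff_ne_zero.mp (Nat.ceil_pos.mpr (hx0 i)))
    have hceil : ∀ i : Fin n, (sn i : ℝ) ≤ ρ * ↑(m n) * (w n i / W) + 1 := by
      intro i
      rw [hsn_eq i]
      exact le_of_lt (Nat.ceil_lt_add_one (le_of_lt (hx0 i)))
    have hsB : ∀ i, (sn i : ℝ) * n ≤ B * m n := by
      intro i
      have h1 : (sn i : ℝ) * n ≤ (ρ * ↑(m n) * (w n i / W) + 1) * n := by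
        apply mul_le_mul_of_nonneg_right (hceil i) (le_of_lt hn0)
      refine h1.trans ?_
      have h2 : ρ * ↑(m n) * (w n i / W) * n ≤ ρ * ↑(m n) * C := by
        rw [mul_assoc (ρ * ↑(m n))]
        exact mul_le_mul_of_nonneg_left (hwWC i) (le_of_lt (mul_pos hρ0 hM0))
      have h3 : (n:ℝ) ≤ m n := hnM n
      rw [hBdef]
      nlinarith [hρ0, hM0]
    have hsM : ∑ i, sn i ≤ m n := by
      have hr : (∑ i, (sn i : ℝ)) ≤ ρ * ↑(m n) + n := by
        calc (∑ i, (sn i : ℝ)) ≤ ∑ i, (ρ * ↑(m n) * (w n i / W) + 1) :=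
              Finset.sum_le_sum (fun i _ => hceil i)
          _ = ρ * ↑(m n) * (∑ i, w n i / W) + n := by
              rw [Finset.sum_add_distrib, ← Finset.mul_sum, Finset.sum_const,
                Finset.card_univ, Fintype.card_fin, nsmul_eq_mul, mul_one]
          _ = ρ * ↑(m n) + n := by
              rw [← Finset.sum_div, ← hWdef, div_self (ne_of_gt hW0), mul_one]
      have hnle : (n:ℝ) ≤ (1 - ρ) * m n := by
        rw [hρcompl]
        have := hm n
        rw [div_le_iff₀ hμ1] at this
        rw [div_mul_eq_mul_div, le_div_iff₀ hε0]
        nlinarith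
      have : (∑ i, (sn i : ℝ)) ≤ m n := by linarith
      exact_mod_cast (by push_cast at this ⊢; exact this : ((∑ i, sn i : ℕ) : ℝ) ≤ (m n : ℝ))
    -- probability facts
    have htail := tail_lower (le_of_lt hα) hD (le_of_lt hτ0) hτ1
    have hαencode : α * (1 - τ) = 8 * K * Real.log (m n) / n := by
      rw [hτdef]
      field_simp
      ring
    have hp : 8 * K * Real.log (m n) / n ≤ (D (Set.Ici τ)).toReal := by
      rw [← hαencode]
      rw [ENNReal.ofReal_le_iff_le_toReal (measure_ne_top D _)] at htail
      exact htail
    set q : ℝ := (D (Set.Iio τ)).toReal with hqdef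
    have hq0 : 0 ≤ q := ENNReal.toReal_nonneg
    have hqp : q = 1 - (D (Set.Ici τ)).toReal := by
      rw [hqdef, ← Set.compl_Ici, prob_compl_eq_one_sub measurableSet_Ici,
        ENNReal.toReal_sub_of_le prob_le_one ENNReal.one_ne_top, ENNReal.toReal_one]
    have hq : q ≤ Real.exp (-(8 * K * Real.log (m n) / n)) := by
      have := Real.add_one_le_exp (-(8 * K * Real.log (m n) / n))
      rw [hqp]
      linarith
    have hofrealq : D (Set.Iio τ) = ENNReal.ofReal q :=
      (ENNReal.ofReal_toReal (measure_ne_top D _)).symm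
    -- assemble
    refine le_trans ?_ (prob_bound n (m n) D τ sn)
    apply tsub_le_tsub_left
    rw [hofrealq]
    refine le_trans (sum_bound n (m n) q K B sn hq0 hq hK2 hB1 hBK hn1 (hnMnat n) hM2
      hs1 hsB hsM) ?_
    -- (n+1) * M⁻¹³ ≤ 2/n
    have hcast : ((n:ℝ≥0∞) + 1) = ENNReal.ofReal ((n:ℝ) + 1) := by
      rw [ENNReal.ofReal_add (by positivity) (by norm_num), ENNReal.ofReal_natCast,
        ENNReal.ofReal_one]
    rw [hcast, ← ENNReal.ofReal_mul (by positivity)]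
    apply ENNReal.ofReal_le_ofReal
    have hMn : (n:ℝ) ≤ m n := hnM n
    have hMinv : ((m n : ℝ))⁻¹ ≤ (n:ℝ)⁻¹ := by
      apply inv_anti₀ hn0 hMn
    have h1 : ((n:ℝ) + 1) * ((m n : ℝ))⁻¹ ^ 3 ≤ ((n:ℝ) + 1) * ((n:ℝ))⁻¹ ^ 3 := by
      apply mul_le_mul_of_nonneg_left ?_ (by positivity)
      apply pow_le_pow_left₀ (by positivity) hMinv
    refine h1.trans ?_
    have hninv : (n:ℝ)⁻¹ ≤ 1 := by
      rw [inv_le_one_iff₀]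
      right; exact_mod_cast hn1
    have hn2r : (n:ℝ) + 1 ≤ 2 * n := by
      have : (1:ℝ) ≤ n := by exact_mod_cast hn1
      linarith
    calc ((n:ℝ) + 1) * ((n:ℝ))⁻¹ ^ 3 ≤ 2 * (n:ℝ) * ((n:ℝ))⁻¹ ^ 3 := by
          apply mul_le_mul_of_nonneg_right hn2r (by positivity)
      _ = 2 * (n:ℝ)⁻¹ * ((n:ℝ)⁻¹ * ((n:ℝ) * (n:ℝ)⁻¹)) := by ring
      _ = 2 * (n:ℝ)⁻¹ * (n:ℝ)⁻¹ := by rw [mul_inv_cancel₀ (ne_of_gt hn0), mul_one]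
      _ ≤ 2 * (n:ℝ)⁻¹ * 1 := by
          apply mul_le_mul_of_nonneg_left hninv (by positivity)
      _ = 2 / n := by rw [mul_one]; ring
  · -- upper bound
    refine Filter.Eventually.of_forall fun n => ?_
    haveI : IsProbabilityMeasure (utilMeasure n (m n) D) := by
      unfold utilMeasure; infer_instance
    exact prob_le_one
end

section
/- Suppose there are two agents with weights w_1 and w_2 = r*w_1 where r >= 1, m items with utilities u_1(g), u_2(g) in [0,1] for all g in M. If u_2(g) > m/r for every item g, and u_1(g) > 0 for at least one item g, then no weighted envy-free (WEF) allocation of M between the two agents exists. -/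
open Finset

/-- An allocation is a partition of the items into `n` bundles: every item belongs to
exactly one bundle. -/
def IsAllocation {n m : ℕ} (A : Fin n → Finset (Fin m)) : Prop :=
  ∀ g : Fin m, ∃! i : Fin n, g ∈ A i

/-- An allocation `A` is weighted envy-free (WEF) if `u_i(A_i)/w_i ≥ u_i(A_j)/w_j` for
all agents `i, j`. -/
def IsWEF {n m : ℕ} (w : Fin n → ℝ) (u : Fin n → Fin m → ℝ)
    (A : Fin n → Finset (Fin m)) : Prop :=
  ∀ i j : Fin n, (∑ g ∈ A j, u i g) / w j ≤ (∑ g ∈ A i, u i g) / w i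

/-- An allocation `A` is weighted proportional (WPROP) if
`u_i(A_i) ≥ (w_i/W)·u_i(M)` for every agent `i`, where `W` is the sum of the weights. -/
def IsWPROP {n m : ℕ} (w : Fin n → ℝ) (u : Fin n → Fin m → ℝ)
    (A : Fin n → Finset (Fin m)) : Prop :=
  ∀ i : Fin n, w i / (∑ j, w j) * (∑ g, u i g) ≤ ∑ g ∈ A i, u i g

/-- Two agents with weights `w₁` and `w₂ = r·w₁` where `r ≥ 1`, and `m` items with
utilities in `[0,1]`.  If agent `2` values every item more than `m/r` and agent `1`
values at least one item positively, then no WEF allocation exists. -/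
theorem two_agents_nonexistence_deterministic (m : ℕ) (r w1 : ℝ) (hr : 1 ≤ r)
    (hw1 : 0 < w1) (u : Fin 2 → Fin m → ℝ)
    (hu0 : ∀ i g, 0 ≤ u i g) (hu1 : ∀ i g, u i g ≤ 1)
    (h2 : ∀ g : Fin m, (m : ℝ) / r < u 1 g)
    (h1 : ∃ g : Fin m, 0 < u 0 g) :
    ¬ ∃ A : Fin 2 → Finset (Fin m), IsAllocation A ∧ IsWEF ![w1, r * w1] u A := by
  rintro ⟨A, hA, hW⟩
  have hr0 : (0:ℝ) < r := lt_of_lt_of_le one_pos hr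
  have hrw : (0:ℝ) < r * w1 := mul_pos hr0 hw1
  -- First: A 0 is empty
  have hA0 : A 0 = ∅ := by
    by_contra hne
    obtain ⟨g0, hg0⟩ := Finset.nonempty_iff_ne_empty.mpr hne
    have key := hW 1 0
    simp only [Matrix.cons_val_zero, Matrix.cons_val_one, Matrix.head_cons] at key
    -- r * sum(A0) ≤ sum(A1)
    have key2 : r * (∑ g ∈ A 0, u 1 g) ≤ ∑ g ∈ A 1, u 1 g := by
      rw [div_le_div_iff₀ hw1 hrw] at key
      nlinarith
    have hlow : (m : ℝ) / r < ∑ g ∈ A 0, u 1 g := by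
      calc (m : ℝ) / r < u 1 g0 := h2 g0
        _ ≤ ∑ g ∈ A 0, u 1 g := Finset.single_le_sum (fun g _ => hu0 1 g) hg0
    have hup : (∑ g ∈ A 1, u 1 g) ≤ m := by
      calc (∑ g ∈ A 1, u 1 g) ≤ ∑ _g ∈ A 1, (1:ℝ) :=
            Finset.sum_le_sum (fun g _ => hu1 1 g)
        _ = (A 1).card := by simp
        _ ≤ m := by
            exact_mod_cast le_trans (Finset.card_le_card (Finset.subset_univ _))
              (le_of_eq (by simp))
    have : (m : ℝ) < r * (∑ g ∈ A 0, u 1 g) := by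
      have := (div_lt_iff₀ hr0).mp hlow
      nlinarith
    linarith
  -- Then every item is in A 1
  obtain ⟨g, hg⟩ := h1
  have hg1 : g ∈ A 1 := by
    obtain ⟨i, hi, -⟩ := hA g
    fin_cases i
    · simp [hA0] at hi
    · exact hi
  have key := hW 0 1
  simp only [Matrix.cons_val_zero, Matrix.cons_val_one, Matrix.head_cons, hA0,
    Finset.sum_empty] at key
  have hpos : 0 < ∑ x ∈ A 1, u 0 x := by
    calc (0:ℝ) < u 0 g := hg
      _ ≤ ∑ x ∈ A 1, u 0 x := Finset.single_le_sum (fun x _ => hu0 0 x) hg1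
  have : (0:ℝ) < (∑ x ∈ A 1, u 0 x) / (r * w1) := div_pos hpos hrw
  simp only [zero_div] at key
  linarith
end
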